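/- arXiv:2402.08503 — 3 statements merged into one kernel-verified Lean document; each statement's English description precedes it below -/
import Mathlib

section
/- (Menon's product theorem.) Let H and K be finite groups of orders 4m² and 4n² respectively, let D_H be a Hadamard difference set in H and D_K a Hadamard difference set in K, and let G = H × K. In ℤ[G], viewing H × {1} and {1} × K as subsets of G, set S := (Σ_{h∈H}(h,1) − 2·Σ_{d∈D_H}(d,1)) · (Σ_{k∈K}(1,k) − 2·Σ_{e∈D_K}(1,e)). Then all coefficients of S are ±1, and the set D = {g ∈ G : the coefficient of g in S is −1} is a Hadamard difference set in G (a difference set with parameters (16m²n², 8m²n² ± 2mn, 4m²n² ± 2mn)). -/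
/-- The group ring element `∑_{x ∈ X} x` associated to a subset `X` of a group `G`. -/
noncomputable def grpSum {G : Type*} [Group G] (X : Finset G) : MonoidAlgebra ℤ G :=
  ∑ x ∈ X, MonoidAlgebra.single x (1 : ℤ)

/-- `D` is a `(v,k,λ)`-difference set in the finite group `G`. -/
def IsDiffSet {G : Type*} [Group G] [Fintype G] [DecidableEq G]
    (v k l : ℕ) (D : Finset G) : Prop :=
  Fintype.card G = v ∧ D.card = k ∧
  ∀ g : G, g ≠ 1 → ((D ×ˢ D).filter (fun p => p.1 * p.2⁻¹ = g)).card = l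

/-- `D` is a Hadamard difference set (with parameter `m`) in the finite group `G`. -/
def IsHadamardDiffSet {G : Type*} [Group G] [Fintype G] [DecidableEq G]
    (m : ℕ) (D : Finset G) : Prop :=
  IsDiffSet (4 * m ^ 2) (2 * m ^ 2 - m) (m ^ 2 - m) D ∨
  IsDiffSet (4 * m ^ 2) (2 * m ^ 2 + m) (m ^ 2 + m) D

/-- ±1 indicator of a finset: `-1` on the set, `1` off it. -/
def chi {G : Type*} [DecidableEq G] (D : Finset G) (x : G) : ℤ :=
  if x ∈ D then -1 else 1

lemma chi_vals {G : Type*} [DecidableEq G] (D : Finset G) (x : G) :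
    chi D x = 1 ∨ chi D x = -1 := by
  unfold chi; split <;> simp

lemma pm_mul {x y : ℤ} (hx : x = 1 ∨ x = -1) (hy : y = 1 ∨ y = -1) :
    x * y = 1 ∨ x * y = -1 := by
  rcases hx with rfl | rfl <;> rcases hy with rfl | rfl <;> norm_num

lemma count_eq_sum {G : Type*} [Group G] [Fintype G] [DecidableEq G]
    (D : Finset G) (a : G) :
    ((((D ×ˢ D).filter fun p => p.1 * p.2⁻¹ = a)).card : ℤ)
      = ∑ y : G, (if a * y ∈ D ∧ y ∈ D then (1:ℤ) else 0) := by
  rw [Finset.sum_boole]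
  norm_cast
  apply Finset.card_nbij' (fun p => p.2) (fun y => (a * y, y))
  · intro p hp
    simp only [Finset.mem_coe, Finset.mem_filter, Finset.mem_product] at hp
    have : p.1 = a * p.2 := by
      rw [← hp.2]; group
    simp only [Finset.mem_coe, Finset.mem_filter, Finset.mem_univ, true_and]
    exact ⟨this ▸ hp.1.1, hp.1.2⟩
  · intro y hy
    simp only [Finset.mem_coe, Finset.mem_filter, Finset.mem_univ, true_and] at hy
    simp [Finset.mem_filter, Finset.mem_product, hy.1, hy.2]
  · intro p hp
    simp only [Finset.mem_coe, Finset.mem_filter, Finset.mem_product] at hp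
    have : p.1 = a * p.2 := by
      rw [← hp.2]; group
    simp [← this]
  · intro y _; simp

lemma sum_shift_ind {G : Type*} [Group G] [Fintype G] [DecidableEq G]
    (D : Finset G) (a : G) :
    ∑ y : G, (if a * y ∈ D then (1:ℤ) else 0) = D.card := by
  rw [Fintype.sum_equiv (Equiv.mulLeft a) _ (fun z => if z ∈ D then (1:ℤ) else 0)
      (fun y => by simp; rfl), Finset.sum_boole]
  simp

lemma chi_total {G : Type*} [Group G] [Fintype G] [DecidableEq G] (D : Finset G) :
    ∑ x : G, chi D x = (Fintype.card G : ℤ) - 2 * D.card := by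
  have e : ∀ x, chi D x = 1 - 2 * (if x ∈ D then (1:ℤ) else 0) := by
    intro x; unfold chi; split <;> ring
  simp_rw [e]
  rw [Finset.sum_sub_distrib, ← Finset.mul_sum, Finset.sum_boole]
  simp [Finset.card_univ]

lemma chi_corr {G : Type*} [Group G] [Fintype G] [DecidableEq G]
    (D : Finset G) (a : G) :
    ∑ y : G, chi D (a * y) * chi D y
      = (Fintype.card G : ℤ) - 4 * D.card
        + 4 * (((D ×ˢ D).filter fun p => p.1 * p.2⁻¹ = a)).card := by
  have e1 : ∀ y : G, chi D (a * y) * chi D y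
      = 1 - 2 * (if a * y ∈ D then (1:ℤ) else 0) - 2 * (if y ∈ D then (1:ℤ) else 0)
        + 4 * (if a * y ∈ D ∧ y ∈ D then (1:ℤ) else 0) := by
    intro y; by_cases h1 : a * y ∈ D <;> by_cases h2 : y ∈ D <;> simp [chi, h1, h2]
  simp_rw [e1]
  rw [Finset.sum_add_distrib, Finset.sum_sub_distrib, Finset.sum_sub_distrib,
    ← Finset.mul_sum, ← Finset.mul_sum, ← Finset.mul_sum,
    sum_shift_ind, count_eq_sum, Finset.sum_boole, Finset.sum_const]
  simp [Finset.card_univ]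
  ring

lemma hadamard_chi {G : Type*} [Group G] [Fintype G] [DecidableEq G]
    (m : ℕ) (hm : 0 < m) (hG : Fintype.card G = 4 * m ^ 2)
    (D : Finset G) (hD : IsHadamardDiffSet m D) :
    ∃ ε : ℤ, (ε = 1 ∨ ε = -1) ∧ (∑ x : G, chi D x = ε * (2 * m)) ∧
      ∀ a : G, a ≠ 1 → ∑ y : G, chi D (a * y) * chi D y = 0 := by
  rcases hD with ⟨hv, hk, hl⟩ | ⟨hv, hk, hl⟩
  · refine ⟨1, Or.inl rfl, ?_, ?_⟩
    · rw [chi_total, hG, hk, Nat.cast_sub (by nlinarith : m ≤ 2 * m ^ 2)]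
      push_cast; ring
    · intro a ha
      rw [chi_corr, hG, hk, hl a ha,
        Nat.cast_sub (by nlinarith : m ≤ 2 * m ^ 2),
        Nat.cast_sub (by nlinarith : m ≤ m ^ 2)]
      push_cast; ring
  · refine ⟨-1, Or.inr rfl, ?_, ?_⟩
    · rw [chi_total, hG, hk]; push_cast; ring
    · intro a ha
      rw [chi_corr, hG, hk, hl a ha]; push_cast; ring

lemma eval_prod {H K : Type*} [Group H] [Group K] [DecidableEq H] [DecidableEq K]
    (A : Finset H) (B : Finset K) (g : H × K) :
    ((∑ a ∈ A, MonoidAlgebra.single ((a, 1) : H × K) (1:ℤ)) *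
     (∑ b ∈ B, MonoidAlgebra.single ((1, b) : H × K) (1:ℤ))).coeff g
      = if g.1 ∈ A ∧ g.2 ∈ B then 1 else 0 := by
  rw [Finset.sum_mul_sum]
  simp only [MonoidAlgebra.single_mul_single, one_mul, Prod.mk_mul_mk, mul_one]
  rw [← Finset.sum_product']
  rw [MonoidAlgebra.coeff_sum, Finset.sum_apply']
  simp only [Prod.mk.eta, MonoidAlgebra.single_apply]
  rw [Finset.sum_ite_eq' (A ×ˢ B) g (fun _ => (1:ℤ))]
  simp [Finset.mem_product]

/-- Menon's product theorem: if `D_H` and `D_K` are Hadamard difference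
sets in `H` (of order `4m²`) and `K` (of order `4n²`) respectively, then the product
`S = (H − 2D_H)·(K − 2D_K)` in `ℤ[H × K]` has coefficients `±1`, and the set of elements
with coefficient `−1` is a Hadamard difference set in `H × K`. -/
theorem menon_product {H K : Type*} [Group H] [Fintype H] [DecidableEq H]
    [Group K] [Fintype K] [DecidableEq K]
    (m n : ℕ) (hm : 0 < m) (hn : 0 < n)
    (hH : Fintype.card H = 4 * m ^ 2) (hK : Fintype.card K = 4 * n ^ 2)
    (DH : Finset H) (hDH : IsHadamardDiffSet m DH)
    (DK : Finset K) (hDK : IsHadamardDiffSet n DK)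
    (S : MonoidAlgebra ℤ (H × K))
    (hS : S = (grpSum (Finset.univ.image (fun h : H => ((h, 1) : H × K))) -
               2 * grpSum (DH.image (fun h : H => ((h, 1) : H × K)))) *
              (grpSum (Finset.univ.image (fun k : K => ((1, k) : H × K))) -
               2 * grpSum (DK.image (fun k : K => ((1, k) : H × K))))) :
    (∀ g : H × K, S.coeff g = 1 ∨ S.coeff g = -1) ∧
    (IsDiffSet (16 * m ^ 2 * n ^ 2) (8 * m ^ 2 * n ^ 2 - 2 * m * n)
        (4 * m ^ 2 * n ^ 2 - 2 * m * n)
        (Finset.univ.filter (fun g : H × K => S.coeff g = -1)) ∨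
     IsDiffSet (16 * m ^ 2 * n ^ 2) (8 * m ^ 2 * n ^ 2 + 2 * m * n)
        (4 * m ^ 2 * n ^ 2 + 2 * m * n)
        (Finset.univ.filter (fun g : H × K => S.coeff g = -1))) := by
  have hU : grpSum (Finset.univ.image fun h : H => ((h, 1) : H × K))
      = ∑ a ∈ (Finset.univ : Finset H), MonoidAlgebra.single ((a, 1) : H × K) (1:ℤ) := by
    rw [grpSum, Finset.sum_image (by intro x _ y _ h; simpa using h)]
  have hEH : grpSum (DH.image fun h : H => ((h, 1) : H × K))
      = ∑ a ∈ DH, MonoidAlgebra.single ((a, 1) : H × K) (1:ℤ) := by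
    rw [grpSum, Finset.sum_image (by intro x _ y _ h; simpa using h)]
  have hV : grpSum (Finset.univ.image fun k : K => ((1, k) : H × K))
      = ∑ b ∈ (Finset.univ : Finset K), MonoidAlgebra.single ((1, b) : H × K) (1:ℤ) := by
    rw [grpSum, Finset.sum_image (by intro x _ y _ h; simpa using h)]
  have hEK : grpSum (DK.image fun k : K => ((1, k) : H × K))
      = ∑ b ∈ DK, MonoidAlgebra.single ((1, b) : H × K) (1:ℤ) := by
    rw [grpSum, Finset.sum_image (by intro x _ y _ h; simpa using h)]
  rw [hU, hEH, hV, hEK] at hS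
  have hS' : S = (∑ a ∈ (Finset.univ : Finset H), MonoidAlgebra.single ((a, 1) : H × K) (1:ℤ)) *
        (∑ b ∈ (Finset.univ : Finset K), MonoidAlgebra.single ((1, b) : H × K) (1:ℤ))
      - 2 * ((∑ a ∈ DH, MonoidAlgebra.single ((a, 1) : H × K) (1:ℤ)) *
        (∑ b ∈ (Finset.univ : Finset K), MonoidAlgebra.single ((1, b) : H × K) (1:ℤ)))
      - 2 * ((∑ a ∈ (Finset.univ : Finset H), MonoidAlgebra.single ((a, 1) : H × K) (1:ℤ)) *
        (∑ b ∈ DK, MonoidAlgebra.single ((1, b) : H × K) (1:ℤ)))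
      + 4 * ((∑ a ∈ DH, MonoidAlgebra.single ((a, 1) : H × K) (1:ℤ)) *
        (∑ b ∈ DK, MonoidAlgebra.single ((1, b) : H × K) (1:ℤ))) := by
    rw [hS]; noncomm_ring
  have h2 : ∀ (X : MonoidAlgebra ℤ (H × K)) (g : H × K), (2 * X).coeff g = X.coeff g + X.coeff g := by
    intro X g
    rw [show (2 : MonoidAlgebra ℤ (H × K)) * X = X + X by noncomm_ring]
    rw [MonoidAlgebra.coeff_add, Finsupp.add_apply]
  have h4 : ∀ (X : MonoidAlgebra ℤ (H × K)) (g : H × K), (4 * X).coeff g = X.coeff g + X.coeff g + X.coeff g + X.coeff g := by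
    intro X g
    rw [show (4 : MonoidAlgebra ℤ (H × K)) * X = X + X + X + X by noncomm_ring]
    rw [MonoidAlgebra.coeff_add, MonoidAlgebra.coeff_add, MonoidAlgebra.coeff_add,
      Finsupp.add_apply, Finsupp.add_apply, Finsupp.add_apply]
  have hcoef : ∀ g : H × K, S.coeff g = chi DH g.1 * chi DK g.2 := by
    intro g
    rw [hS', MonoidAlgebra.coeff_add, Finsupp.add_apply, MonoidAlgebra.coeff_sub, Finsupp.sub_apply,
      MonoidAlgebra.coeff_sub, Finsupp.sub_apply, h2, h2, h4,
      eval_prod, eval_prod, eval_prod, eval_prod]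
    by_cases h1 : g.1 ∈ DH <;> by_cases hb : g.2 ∈ DK <;> simp [chi, h1, hb] <;> ring
  constructor
  · intro g
    rw [hcoef]
    exact pm_mul (chi_vals DH g.1) (chi_vals DK g.2)
  obtain ⟨εH, hεH, hsH, hcH⟩ := hadamard_chi m hm hH DH hDH
  obtain ⟨εK, hεK, hsK, hcK⟩ := hadamard_chi n hn hK DK hDK
  set D : Finset (H × K) := Finset.univ.filter (fun g : H × K => S.coeff g = -1) with hDdef
  have hmemD : ∀ y : H × K, y ∈ D ↔ chi DH y.1 * chi DK y.2 = -1 := by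
    intro y; rw [hDdef]; simp [hcoef]
  have hsum_c : ∑ y : H × K, chi DH y.1 * chi DK y.2 = εH * εK * (4 * m * n) := by
    rw [Fintype.sum_prod_type, ← Finset.sum_mul_sum, hsH, hsK]
    push_cast; ring
  have hDcard : 2 * (D.card : ℤ) = 16 * m^2 * n^2 - εH * εK * (4 * m * n) := by
    have e : ∀ y : H × K, (if y ∈ D then (2:ℤ) else 0) = 1 - chi DH y.1 * chi DK y.2 := by
      intro y
      by_cases hy : y ∈ D
      · rw [if_pos hy, (hmemD y).mp hy]; ring
      · rcases pm_mul (chi_vals DH y.1) (chi_vals DK y.2) with h | h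
        · rw [if_neg hy, h]; ring
        · exact absurd ((hmemD y).mpr h) hy
    have e2 : ∑ y : H × K, (if y ∈ D then (2:ℤ) else 0) = 2 * D.card := by
      simp_rw [show ∀ y : H × K, (if y ∈ D then (2:ℤ) else 0) = 2 * (if y ∈ D then 1 else 0)
        from fun y => by split <;> ring]
      rw [← Finset.mul_sum, Finset.sum_boole]
      simp
    rw [← e2]
    simp_rw [e]
    rw [Finset.sum_sub_distrib, hsum_c, Finset.sum_const, Finset.card_univ,
      Fintype.card_prod, hH, hK]
    push_cast; ring
  have hlam : ∀ g : H × K, g ≠ 1 →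
      4 * ((((D ×ˢ D).filter fun p => p.1 * p.2⁻¹ = g)).card : ℤ)
        = 16 * m^2 * n^2 - 2 * (εH * εK * (4 * m * n)) := by
    intro g hg
    rw [count_eq_sum, Finset.mul_sum]
    have e : ∀ y : H × K, 4 * (if g * y ∈ D ∧ y ∈ D then (1:ℤ) else 0)
        = 1 - chi DH (g * y).1 * chi DK (g * y).2 - chi DH y.1 * chi DK y.2
            + (chi DH (g * y).1 * chi DK (g * y).2) * (chi DH y.1 * chi DK y.2) := by
      intro y
      rcases pm_mul (chi_vals DH (g * y).1) (chi_vals DK (g * y).2) with h1 | h1 <;>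
        rcases pm_mul (chi_vals DH y.1) (chi_vals DK y.2) with h2 | h2 <;>
        simp only [hmemD, h1, h2] <;> norm_num
    simp_rw [e]
    rw [Finset.sum_add_distrib, Finset.sum_sub_distrib, Finset.sum_sub_distrib]
    have t1 : ∑ y : H × K, chi DH (g * y).1 * chi DK (g * y).2 = εH * εK * (4 * m * n) := by
      rw [Fintype.sum_equiv (Equiv.mulLeft g) _ (fun y : H × K => chi DH y.1 * chi DK y.2)
        (fun y => by simp)]
      exact hsum_c
    have t2 : ∑ y : H × K, (chi DH (g * y).1 * chi DK (g * y).2) * (chi DH y.1 * chi DK y.2)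
        = 0 := by
      have e3 : ∀ y : H × K, (chi DH (g * y).1 * chi DK (g * y).2) * (chi DH y.1 * chi DK y.2)
          = (chi DH (g.1 * y.1) * chi DH y.1) * (chi DK (g.2 * y.2) * chi DK y.2) := by
        intro y; simp only [Prod.fst_mul, Prod.snd_mul]; ring
      simp_rw [e3]
      rw [Fintype.sum_prod_type]
      dsimp only
      rw [← Finset.sum_mul_sum]
      rcases (show g.1 ≠ 1 ∨ g.2 ≠ 1 by
        by_contra hc; push_neg at hc
        exact hg (Prod.ext hc.1 hc.2)) with h | h
      · rw [hcH g.1 h, zero_mul]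
      · rw [hcK g.2 h, mul_zero]
    rw [t1, t2, hsum_c, Finset.sum_const, Finset.card_univ, Fintype.card_prod, hH, hK]
    push_cast; ring
  have hcardG : Fintype.card (H × K) = 16 * m ^ 2 * n ^ 2 := by
    rw [Fintype.card_prod, hH, hK]; ring
  rcases pm_mul hεH hεK with he | he
  · left
    refine ⟨hcardG, ?_, ?_⟩
    · rw [he] at hDcard
      have hle : 2 * m * n ≤ 8 * m ^ 2 * n ^ 2 := by nlinarith
      have h1 : ((8 * m ^ 2 * n ^ 2 - 2 * m * n : ℕ) : ℤ) = (D.card : ℤ) := by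
        rw [Nat.cast_sub hle]; push_cast; linarith
      exact_mod_cast h1.symm
    · intro g hg
      have ht := hlam g hg
      rw [he] at ht
      have hle : 2 * m * n ≤ 4 * m ^ 2 * n ^ 2 := by nlinarith
      have h1 : ((4 * m ^ 2 * n ^ 2 - 2 * m * n : ℕ) : ℤ)
          = ((((D ×ˢ D).filter fun p => p.1 * p.2⁻¹ = g)).card : ℤ) := by
        rw [Nat.cast_sub hle]; push_cast; linarith
      exact_mod_cast h1.symm
  · right
    refine ⟨hcardG, ?_, ?_⟩
    · rw [he] at hDcard
      have h1 : ((8 * m ^ 2 * n ^ 2 + 2 * m * n : ℕ) : ℤ) = (D.card : ℤ) := by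
        push_cast; linarith
      exact_mod_cast h1.symm
    · intro g hg
      have ht := hlam g hg
      rw [he] at ht
      have h1 : ((4 * m ^ 2 * n ^ 2 + 2 * m * n : ℕ) : ℤ)
          = ((((D ×ˢ D).filter fun p => p.1 * p.2⁻¹ = g)).card : ℤ) := by
        push_cast; linarith
      exact_mod_cast h1.symm
end

section
/- (Dillon's generalized product theorem.) Let G be a finite group with subgroups H and K of orders 4m² and 4n² respectively such that G = HK and H ∩ K = {1}. Let D_H be a Hadamard difference set in H and D_K a Hadamard difference set in K. In ℤ[G], set S := (Σ_{h∈H} h − 2·Σ_{d∈D_H} d) · (Σ_{k∈K} k − 2·Σ_{e∈D_K} e). Then all coefficients of S are ±1, and the set D = {g ∈ G : the coefficient of g in S is −1} is a Hadamard difference set in G (a difference set with parameters (16m²n², 8m²n² ± 2mn, 4m²n² ± 2mn)). -/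
open scoped Classical

lemma dillon_aux_count {Γ : Type*} [Group Γ] [Fintype Γ] [DecidableEq Γ] (D : Finset Γ) (g : Γ) :
    ∑ y : Γ, (if g * y ∈ D then (1:ℤ) else 0) * (if y ∈ D then (1:ℤ) else 0)
      = (((D ×ˢ D).filter (fun p => p.1 * p.2⁻¹ = g)).card : ℤ) := by
  have h1 : ∀ y : Γ, (if g * y ∈ D then (1:ℤ) else 0) * (if y ∈ D then (1:ℤ) else 0)
      = if g * y ∈ D ∧ y ∈ D then (1:ℤ) else 0 := by
    intro y; split_ifs <;> simp_all
  simp_rw [h1]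
  rw [Finset.sum_boole]
  norm_cast
  apply Finset.card_nbij' (fun y => (g*y, y)) (fun p => p.2)
  · intro y hy
    simp only [Finset.mem_coe, Finset.mem_filter, Finset.mem_univ, true_and] at hy
    simp [Finset.mem_filter, Finset.mem_product, hy.1, hy.2]
  · intro p hp
    simp only [Finset.mem_coe, Finset.mem_filter, Finset.mem_product] at hp
    have : g * p.2 = p.1 := by rw [← hp.2, inv_mul_cancel_right]
    simp [Finset.mem_filter, this, hp.1.1, hp.1.2]
  · intro y _; rfl
  · intro p hp
    simp only [Finset.mem_coe, Finset.mem_filter, Finset.mem_product] at hp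
    have : g * p.2 = p.1 := by rw [← hp.2, inv_mul_cancel_right]
    simp [this]

lemma dillon_aux_ds {Γ : Type*} [Group Γ] [Fintype Γ] [DecidableEq Γ] {v k l : ℕ}
    (D : Finset Γ) (hD : IsDiffSet v k l D) {g : Γ} (hg : g ≠ 1) :
    ∑ y : Γ, (1 - 2 * (if g * y ∈ D then (1:ℤ) else 0)) *
      (1 - 2 * (if y ∈ D then (1:ℤ) else 0)) = (v : ℤ) - 4 * k + 4 * l := by
  obtain ⟨hv, hk, hl⟩ := hD
  have e1 : ∑ y : Γ, (if y ∈ D then (1:ℤ) else 0) = k := by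
    rw [Finset.sum_boole]; rw [← hk]; congr 1
    simp [Finset.filter_mem_eq_inter]
  have e2 : ∑ y : Γ, (if g * y ∈ D then (1:ℤ) else 0) = k := by
    rw [← e1]
    exact Fintype.sum_equiv (Equiv.mulLeft g) _ _ (fun y => rfl)
  have e3 := dillon_aux_count D g
  rw [hl g hg] at e3
  have expand : ∀ y : Γ, (1 - 2 * (if g * y ∈ D then (1:ℤ) else 0)) *
      (1 - 2 * (if y ∈ D then (1:ℤ) else 0))
      = 1 - 2 * (if g * y ∈ D then (1:ℤ) else 0) - 2 * (if y ∈ D then (1:ℤ) else 0)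
        + 4 * ((if g * y ∈ D then (1:ℤ) else 0) * (if y ∈ D then (1:ℤ) else 0)) := by
    intro y; ring
  simp_rw [expand]
  rw [Finset.sum_add_distrib, Finset.sum_sub_distrib, Finset.sum_sub_distrib,
    ← Finset.mul_sum, ← Finset.mul_sum, ← Finset.mul_sum, e1, e2, e3,
    Finset.sum_const, Finset.card_univ, hv]
  ring

lemma dillon_aux_hds {Γ : Type*} [Group Γ] [Fintype Γ] [DecidableEq Γ] {n : ℕ}
    (D : Finset Γ) (hD : IsHadamardDiffSet n D) {g : Γ} (hg : g ≠ 1) :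
    ∑ y : Γ, (1 - 2 * (if g * y ∈ D then (1:ℤ) else 0)) *
      (1 - 2 * (if y ∈ D then (1:ℤ) else 0)) = 0 := by
  have h1 : n ≤ n ^ 2 := Nat.le_self_pow two_ne_zero n
  have h2 : n ≤ 2 * n ^ 2 := h1.trans (by omega)
  rcases hD with h | h
  · rw [dillon_aux_ds D h hg]
    push_cast [Nat.cast_sub h1, Nat.cast_sub h2]; ring
  · rw [dillon_aux_ds D h hg]
    push_cast; ring

lemma msingle_sub {G : Type*} (x : G) (c d : ℤ) :
    MonoidAlgebra.single x (c - d) = MonoidAlgebra.single x c - MonoidAlgebra.single x d :=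
  MonoidAlgebra.single_sub x c d

lemma dillon_aux_final {G : Type*} [Group G] [Fintype G] [DecidableEq G] (m n : ℕ)
    (hm : 0 < m) (hn : 0 < n)
    (D : Finset G) (hcard : Fintype.card G = 16 * m ^ 2 * n ^ 2) (t : ℤ)
    (ht : t = m * n ∨ t = -(m * n))
    (hD : 2 * (D.card : ℤ) = 16 * m ^ 2 * n ^ 2 - 4 * t)
    (hN : ∀ g : G, g ≠ 1 →
      4 * ((((D ×ˢ D).filter fun p => p.1 * p.2⁻¹ = g).card : ℤ)) = 16 * m ^ 2 * n ^ 2 - 8 * t) :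
    IsDiffSet (16 * m ^ 2 * n ^ 2) (8 * m ^ 2 * n ^ 2 - 2 * m * n)
        (4 * m ^ 2 * n ^ 2 - 2 * m * n) D ∨
    IsDiffSet (16 * m ^ 2 * n ^ 2) (8 * m ^ 2 * n ^ 2 + 2 * m * n)
        (4 * m ^ 2 * n ^ 2 + 2 * m * n) D := by
  have hmn : 1 ≤ m * n := Nat.one_le_iff_ne_zero.mpr (by positivity)
  have key : m * n ≤ m ^ 2 * n ^ 2 := by
    calc m * n = (m * n) * 1 := by ring
      _ ≤ (m * n) * (m * n) := Nat.mul_le_mul_left _ hmn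
      _ = m ^ 2 * n ^ 2 := by ring
  have hle1 : 2 * m * n ≤ 8 * m ^ 2 * n ^ 2 := by nlinarith [key]
  have hle2 : 2 * m * n ≤ 4 * m ^ 2 * n ^ 2 := by nlinarith [key]
  rcases ht with ht | ht
  · left
    refine ⟨hcard, ?_, ?_⟩
    · have hZ : (D.card : ℤ) = ((8 * m ^ 2 * n ^ 2 - 2 * m * n : ℕ) : ℤ) := by
        rw [Nat.cast_sub hle1]
        push_cast
        rw [ht] at hD; push_cast at hD; linarith
      exact_mod_cast hZ
    · intro g hg
      have h4 := hN g hg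
      rw [ht] at h4; push_cast at h4
      have hZ : ((((D ×ˢ D).filter fun p => p.1 * p.2⁻¹ = g).card : ℤ))
          = ((4 * m ^ 2 * n ^ 2 - 2 * m * n : ℕ) : ℤ) := by
        rw [Nat.cast_sub hle2]
        push_cast; linarith
      exact_mod_cast hZ
  · right
    refine ⟨hcard, ?_, ?_⟩
    · have hZ : (D.card : ℤ) = ((8 * m ^ 2 * n ^ 2 + 2 * m * n : ℕ) : ℤ) := by
        push_cast
        rw [ht] at hD; push_cast at hD; linarith
      exact_mod_cast hZ
    · intro g hg
      have h4 := hN g hg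
      rw [ht] at h4; push_cast at h4
      have hZ : ((((D ×ˢ D).filter fun p => p.1 * p.2⁻¹ = g).card : ℤ))
          = ((4 * m ^ 2 * n ^ 2 + 2 * m * n : ℕ) : ℤ) := by
        push_cast; linarith
      exact_mod_cast hZ

/-- Dillon's generalized product theorem: if `G = HK` with `H ∩ K = 1`,
`|H| = 4m²`, `|K| = 4n²`, and `D_H ⊆ H`, `D_K ⊆ K` are Hadamard difference sets, then
`S = (H − 2D_H)·(K − 2D_K)` in `ℤ[G]` has coefficients `±1`, and the set of elements of
coefficient `−1` is a Hadamard difference set in `G`. -/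
theorem dillon_product {G : Type*} [Group G] [Fintype G] [DecidableEq G]
    (H K : Subgroup G)
    (m n : ℕ) (hm : 0 < m) (hn : 0 < n)
    (hHcard : Nat.card H = 4 * m ^ 2) (hKcard : Nat.card K = 4 * n ^ 2)
    (hHK : ∀ g : G, ∃ h ∈ H, ∃ k ∈ K, g = h * k)
    (hmeet : H ⊓ K = ⊥)
    (DH : Finset H) (hDH : IsHadamardDiffSet m DH)
    (DK : Finset K) (hDK : IsHadamardDiffSet n DK)
    (S : MonoidAlgebra ℤ G)
    (hS : S = ((∑ h : H, MonoidAlgebra.single (h : G) (1 : ℤ)) -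
               2 * ∑ d ∈ DH, MonoidAlgebra.single (d : G) (1 : ℤ)) *
              ((∑ k : K, MonoidAlgebra.single (k : G) (1 : ℤ)) -
               2 * ∑ e ∈ DK, MonoidAlgebra.single (e : G) (1 : ℤ))) :
    (∀ g : G, S.coeff g = 1 ∨ S.coeff g = -1) ∧
    (IsDiffSet (16 * m ^ 2 * n ^ 2) (8 * m ^ 2 * n ^ 2 - 2 * m * n)
        (4 * m ^ 2 * n ^ 2 - 2 * m * n)
        (Finset.univ.filter (fun g : G => S.coeff g = -1)) ∨
     IsDiffSet (16 * m ^ 2 * n ^ 2) (8 * m ^ 2 * n ^ 2 + 2 * m * n)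
        (4 * m ^ 2 * n ^ 2 + 2 * m * n)
        (Finset.univ.filter (fun g : G => S.coeff g = -1))) := by
  classical
  -- decomposition functions
  choose fh hfh fk hfk hfe using hHK
  set π₁ : G → H := fun g => ⟨fh g, hfh g⟩ with hπ₁def
  set π₂ : G → K := fun g => ⟨fk g, hfk g⟩ with hπ₂def
  have hdecomp : ∀ g : G, g = (π₁ g : G) * (π₂ g : G) := fun g => hfe g
  -- uniqueness of decomposition
  have inj : ∀ (h1 h2 : H) (k1 k2 : K), (h1 : G) * k1 = (h2 : G) * k2 → h1 = h2 ∧ k1 = k2 := by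
    intro h1 h2 k1 k2 hEq
    have h1e : (h1 : G) = (h2 : G) * k2 * (k1 : G)⁻¹ := by rw [← hEq]; group
    have hkeq : ((h2 : G))⁻¹ * h1 = (k2 : G) * (k1 : G)⁻¹ := by rw [h1e]; group
    have hmem : ((h2 : G))⁻¹ * (h1 : G) ∈ H ⊓ K := by
      refine ⟨H.mul_mem (H.inv_mem h2.2) h1.2, ?_⟩
      rw [hkeq]; exact K.mul_mem k2.2 (K.inv_mem k1.2)
    rw [hmeet, Subgroup.mem_bot] at hmem
    have hh : h1 = h2 := by
      apply Subtype.ext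
      exact (inv_mul_eq_one.mp hmem).symm
    refine ⟨hh, ?_⟩
    apply Subtype.ext
    apply mul_left_cancel (a := (h2 : G))
    rw [← hEq, hh]
  have π_eq : ∀ (h : H) (k : K), π₁ ((h : G) * k) = h ∧ π₂ ((h : G) * k) = k := by
    intro h k
    exact inj _ h _ k (hdecomp ((h : G) * k)).symm
  have ebij : Function.Bijective (fun p : H × K => ((p.1 : G) * p.2)) := by
    constructor
    · rintro ⟨h1, k1⟩ ⟨h2, k2⟩ hEq
      obtain ⟨e1, e2⟩ := inj h1 h2 k1 k2 hEq
      simp [e1, e2]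
    · intro g; exact ⟨(π₁ g, π₂ g), (hdecomp g).symm⟩
  have hcardG : Fintype.card G = 16 * m ^ 2 * n ^ 2 := by
    rw [← Fintype.card_of_bijective ebij, Fintype.card_prod,
      ← Nat.card_eq_fintype_card, ← Nat.card_eq_fintype_card, hHcard, hKcard]
    ring
  have hHft : Fintype.card H = 4 * m ^ 2 := by rw [← Nat.card_eq_fintype_card, hHcard]
  have hKft : Fintype.card K = 4 * n ^ 2 := by rw [← Nat.card_eq_fintype_card, hKcard]
  -- coefficient functions
  set a : H → ℤ := fun h => 1 - 2 * (if h ∈ DH then (1:ℤ) else 0) with hadef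
  set b : K → ℤ := fun k => 1 - 2 * (if k ∈ DK then (1:ℤ) else 0) with hbdef
  have two_single : ∀ (x : G), (2 : MonoidAlgebra ℤ G) * MonoidAlgebra.single x (1:ℤ)
      = MonoidAlgebra.single x (2:ℤ) := by
    intro x
    rw [two_mul, ← MonoidAlgebra.single_add]
    norm_num
  have hA : (∑ h : H, MonoidAlgebra.single (h : G) (1 : ℤ)) -
      2 * ∑ d ∈ DH, MonoidAlgebra.single (d : G) (1 : ℤ)
      = ∑ h : H, MonoidAlgebra.single (h : G) (a h) := by
    rw [Finset.mul_sum]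
    simp_rw [two_single]
    have t2 : ∀ h : H, MonoidAlgebra.single (h : G) (a h)
        = MonoidAlgebra.single (h : G) (1:ℤ) -
          (if h ∈ DH then MonoidAlgebra.single (h : G) (2:ℤ) else 0) := by
      intro h
      simp only [hadef]
      split_ifs with hh
      · rw [show (1 - 2 * (1:ℤ)) = 1 - 2 by norm_num, msingle_sub _ _ _]
      · norm_num
    simp_rw [t2]
    rw [Finset.sum_sub_distrib]
    congr 1
    rw [Fintype.sum_ite_mem]
  have hB : (∑ k : K, MonoidAlgebra.single (k : G) (1 : ℤ)) -
      2 * ∑ e ∈ DK, MonoidAlgebra.single (e : G) (1 : ℤ)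
      = ∑ k : K, MonoidAlgebra.single (k : G) (b k) := by
    rw [Finset.mul_sum]
    simp_rw [two_single]
    have t2 : ∀ k : K, MonoidAlgebra.single (k : G) (b k)
        = MonoidAlgebra.single (k : G) (1:ℤ) -
          (if k ∈ DK then MonoidAlgebra.single (k : G) (2:ℤ) else 0) := by
      intro k
      simp only [hbdef]
      split_ifs with hh
      · rw [show (1 - 2 * (1:ℤ)) = 1 - 2 by norm_num, msingle_sub _ _ _]
      · norm_num
    simp_rw [t2]
    rw [Finset.sum_sub_distrib]
    congr 1
    rw [Fintype.sum_ite_mem]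
  -- the key coefficient formula
  have hS' : ∀ (h0 : H) (k0 : K), S.coeff ((h0 : G) * k0) = a h0 * b k0 := by
    intro h0 k0
    have sumapH : ∀ (f : H → MonoidAlgebra ℤ G) (y : G),
        (∑ i : H, f i).coeff y = ∑ i : H, (f i).coeff y := fun f y => by
          simp [MonoidAlgebra.coeff_sum, Finsupp.finset_sum_apply]
    have sumapK : ∀ (f : K → MonoidAlgebra ℤ G) (y : G),
        (∑ i : K, f i).coeff y = ∑ i : K, (f i).coeff y := fun f y => by
          simp [MonoidAlgebra.coeff_sum, Finsupp.finset_sum_apply]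
    have sap : ∀ (x y : G) (c : ℤ),
        (MonoidAlgebra.single x c).coeff y = if x = y then c else 0 := fun x y c =>
      Finsupp.single_apply
    rw [hS, hA, hB, Finset.sum_mul_sum]
    simp_rw [MonoidAlgebra.single_mul_single]
    rw [sumapH]
    simp_rw [sumapK, sap]
    have inner : ∀ h : H, (∑ k : K, if ((h:G) * k = (h0:G) * k0) then a h * b k else 0)
        = if h = h0 then a h0 * b k0 else 0 := by
      intro h
      by_cases hh : h = h0
      · subst hh
        rw [if_pos rfl]
        have hcond : ∀ k : K, ((h:G) * k = (h:G) * k0) ↔ k = k0 := by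
          intro k
          constructor
          · intro hc; exact (inj h h k k0 hc).2
          · rintro rfl; rfl
        simp_rw [hcond]
        rw [Fintype.sum_ite_eq' k0 (fun k => a h * b k)]
      · rw [if_neg hh]
        apply Finset.sum_eq_zero
        intro k _
        rw [if_neg]
        intro hc
        exact hh (inj h h0 k k0 hc).1
    simp_rw [inner]
    rw [Fintype.sum_ite_eq' h0 (fun _ => a h0 * b k0)]
  have hSdec : ∀ g : G, S.coeff g = a (π₁ g) * b (π₂ g) := by
    intro g
    have := hS' (π₁ g) (π₂ g)
    rwa [← hdecomp g] at this
  have pm_a : ∀ h : H, a h = 1 ∨ a h = -1 := by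
    intro h; simp only [hadef]; split_ifs <;> norm_num
  have pm_b : ∀ k : K, b k = 1 ∨ b k = -1 := by
    intro k; simp only [hbdef]; split_ifs <;> norm_num
  have part1 : ∀ g : G, S.coeff g = 1 ∨ S.coeff g = -1 := by
    intro g
    rw [hSdec g]
    rcases pm_a (π₁ g) with h1 | h1 <;> rcases pm_b (π₂ g) with h2 | h2 <;>
      rw [h1, h2] <;> norm_num
  set Dset := Finset.univ.filter (fun g : G => S.coeff g = -1) with hDsetdef
  have hSind : ∀ g : G, S.coeff g = 1 - 2 * (if g ∈ Dset then (1:ℤ) else 0) := by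
    intro g
    by_cases hgD : g ∈ Dset
    · rw [if_pos hgD]
      have := (Finset.mem_filter.mp hgD).2
      rw [this]; ring
    · rw [if_neg hgD]
      rcases part1 g with h | h
      · rw [h]; ring
      · exact absurd (Finset.mem_filter.mpr ⟨Finset.mem_univ g, h⟩) hgD
  have CH : ∀ κ : H, κ ≠ 1 → (∑ h : H, a (κ * h) * a h) = 0 := by
    intro κ hκ
    have := dillon_aux_hds DH hDH hκ
    simpa [hadef] using this
  have CK : ∀ κ : K, κ ≠ 1 → (∑ k : K, b (κ * k) * b k) = 0 := by
    intro κ hκ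
    have := dillon_aux_hds DK hDK hκ
    simpa [hbdef] using this
  have hbsq : ∀ k : K, b k * b k = 1 := by
    intro k; rcases pm_b k with h | h <;> rw [h] <;> norm_num
  -- inner convolution
  have inner : ∀ u : G, (∑ k : K, S.coeff (u * k) * b k)
      = if π₂ u = 1 then ((4 * n ^ 2 : ℕ) : ℤ) * a (π₁ u) else 0 := by
    intro u
    have hu : ∀ k : K, S.coeff (u * k) = a (π₁ u) * b (π₂ u * k) := by
      intro k
      have harg : u * (k : G) = ((π₁ u : G)) * ((π₂ u * k : K) : G) := by
        conv_lhs => rw [hdecomp u]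
        push_cast
        rw [mul_assoc]
      rw [harg, hS']
    simp_rw [hu]
    have rearr : (∑ k : K, a (π₁ u) * b (π₂ u * k) * b k)
        = a (π₁ u) * ∑ k : K, b (π₂ u * k) * b k := by
      rw [Finset.mul_sum]
      apply Finset.sum_congr rfl
      intro k _; ring
    rw [rearr]
    by_cases hone : π₂ u = 1
    · rw [if_pos hone, hone]
      simp only [one_mul]
      simp_rw [hbsq]
      rw [Finset.sum_const, Finset.card_univ, hKft]
      push_cast; ring
    · rw [if_neg hone, CK (π₂ u) hone, mul_zero]
  -- full convolution vanishes off the identity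
  have Cg : ∀ g : G, g ≠ 1 → (∑ y : G, S.coeff (g * y) * S.coeff y) = 0 := by
    intro g hg
    have re : (∑ y : G, S.coeff (g * y) * S.coeff y)
        = ∑ p : H × K, S.coeff (g * ((p.1 : G) * p.2)) * S.coeff ((p.1 : G) * p.2) :=
      (Fintype.sum_bijective _ ebij _ _ (fun p => rfl)).symm
    rw [re, Fintype.sum_prod_type]
    have step : ∀ h : H, (∑ k : K, S.coeff (g * ((h:G) * k)) * S.coeff ((h:G) * k))
        = (if π₂ (g * (h:G)) = 1 then ((4 * n ^ 2 : ℕ) : ℤ) * a (π₁ (g * (h:G))) else 0) * a h := by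
      intro h
      have t : ∀ k : K, S.coeff (g * ((h:G) * k)) * S.coeff ((h:G) * k)
          = (S.coeff ((g * (h:G)) * k) * b k) * a h := by
        intro k
        rw [← mul_assoc, hS' h k]
        ring
      simp_rw [t]
      rw [← Finset.sum_mul, inner (g * (h:G))]
    simp_rw [step]
    by_cases hgH : g ∈ H
    · have hπ : ∀ h : H, π₁ (g * (h:G)) = ⟨g, hgH⟩ * h ∧ π₂ (g * (h:G)) = 1 := by
        intro h
        have harg : g * (h : G) = (((⟨g, hgH⟩ * h : H) : G)) * ((1 : K) : G) := by
          push_cast; rw [mul_one]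
        rw [harg]
        exact π_eq _ _
      have hterm : ∀ h : H,
          (if π₂ (g * (h:G)) = 1 then ((4 * n ^ 2 : ℕ) : ℤ) * a (π₁ (g * (h:G))) else 0) * a h
          = ((4 * n ^ 2 : ℕ) : ℤ) * (a ((⟨g, hgH⟩ : H) * h) * a h) := by
        intro h
        rw [if_pos (hπ h).2, (hπ h).1, mul_assoc]
      simp_rw [hterm]
      rw [← Finset.mul_sum]
      have hne : (⟨g, hgH⟩ : H) ≠ 1 := by
        intro hc
        exact hg (by simpa using congrArg Subtype.val hc)
      rw [CH _ hne, mul_zero]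
    · apply Finset.sum_eq_zero
      intro h _
      have hπ2 : π₂ (g * (h:G)) ≠ 1 := by
        intro hc
        have hd := hdecomp (g * (h:G))
        rw [hc, OneMemClass.coe_one, mul_one] at hd
        apply hgH
        have : g = (π₁ (g * (h:G)) : G) * ((h:G))⁻¹ := by rw [← hd]; group
        rw [this]
        exact H.mul_mem (π₁ (g * (h:G))).2 (H.inv_mem h.2)
      rw [if_neg hπ2, zero_mul]
  -- total sum
  have hsum_a : (∑ h : H, a h) = ((4 * m ^ 2 : ℕ) : ℤ) - 2 * DH.card := by
    simp only [hadef]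
    rw [Finset.sum_sub_distrib, ← Finset.mul_sum, Finset.sum_boole, Finset.sum_const,
      Finset.card_univ, hHft]
    simp [Finset.filter_mem_eq_inter]
  have hsum_b : (∑ k : K, b k) = ((4 * n ^ 2 : ℕ) : ℤ) - 2 * DK.card := by
    simp only [hbdef]
    rw [Finset.sum_sub_distrib, ← Finset.mul_sum, Finset.sum_boole, Finset.sum_const,
      Finset.card_univ, hKft]
    simp [Finset.filter_mem_eq_inter]
  have hT : (∑ g : G, S.coeff g) = (∑ h : H, a h) * (∑ k : K, b k) := by
    rw [← Fintype.sum_bijective _ ebij (fun p : H × K => S.coeff ((p.1 : G) * p.2)) S.coeff (fun p => rfl)]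
    rw [Fintype.sum_prod_type]
    simp_rw [hS']
    rw [← Finset.sum_mul_sum]
  have hshift : ∀ g : G, (∑ y : G, S.coeff (g * y)) = ∑ y : G, S.coeff y := fun g =>
    Fintype.sum_equiv (Equiv.mulLeft g) _ _ (fun y => rfl)
  have hDcard : 2 * ((Dset.card : ℤ)) = 16 * m ^ 2 * n ^ 2 - ∑ g : G, S.coeff g := by
    have hh : (∑ g : G, S.coeff g) = (Fintype.card G : ℤ) - 2 * Dset.card := by
      have : ∀ g : G, S.coeff g = 1 - 2 * (if g ∈ Dset then (1:ℤ) else 0) := hSind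
      simp_rw [this]
      rw [Finset.sum_sub_distrib, ← Finset.mul_sum, Finset.sum_boole, Finset.sum_const,
        Finset.card_univ]
      simp [Finset.filter_mem_eq_inter]
    rw [hh, hcardG]
    push_cast; ring
  have hN : ∀ g : G, g ≠ 1 →
      4 * ((((Dset ×ˢ Dset).filter fun p => p.1 * p.2⁻¹ = g).card : ℤ))
        = 16 * m ^ 2 * n ^ 2 - 2 * ∑ y : G, S.coeff y := by
    intro g hg
    have e3 := dillon_aux_count Dset g
    have e4 : ∀ y : G, (1 - S.coeff (g * y)) * (1 - S.coeff y)
        = 4 * ((if g * y ∈ Dset then (1:ℤ) else 0) * (if y ∈ Dset then (1:ℤ) else 0)) := by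
      intro y; rw [hSind (g * y), hSind y]; ring
    have e5 : (∑ y : G, (1 - S.coeff (g * y)) * (1 - S.coeff y))
        = 4 * ((((Dset ×ˢ Dset).filter fun p => p.1 * p.2⁻¹ = g).card : ℤ)) := by
      simp_rw [e4]
      rw [← Finset.mul_sum, e3]
    have expand : ∀ y : G, (1 - S.coeff (g * y)) * (1 - S.coeff y)
        = 1 - S.coeff (g * y) - S.coeff y + S.coeff (g * y) * S.coeff y := by intro y; ring
    have e6 : (∑ y : G, (1 - S.coeff (g * y)) * (1 - S.coeff y))
        = (Fintype.card G : ℤ) - (∑ y : G, S.coeff (g * y)) - (∑ y : G, S.coeff y)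
          + ∑ y : G, S.coeff (g * y) * S.coeff y := by
      simp_rw [expand]
      rw [Finset.sum_add_distrib, Finset.sum_sub_distrib, Finset.sum_sub_distrib,
        Finset.sum_const, Finset.card_univ]
      push_cast; ring
    rw [e6, hshift g, Cg g hg, hcardG] at e5
    push_cast at e5
    linarith
  -- case analysis on the parameters
  refine ⟨part1, ?_⟩
  have hm1 : m ≤ m ^ 2 := Nat.le_self_pow two_ne_zero m
  have hn1 : n ≤ n ^ 2 := Nat.le_self_pow two_ne_zero n
  rcases hDH with hc1 | hc1 <;> rcases hDK with hc2 | hc2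
  · -- DH card = 2m²-m, DK card = 2n²-n ; T = (2m)(2n) = 4mn
    have hca : (DH.card : ℤ) = 2 * m ^ 2 - m := by
      rw [hc1.2.1, Nat.cast_sub (by omega)]; push_cast; ring
    have hcb : (DK.card : ℤ) = 2 * n ^ 2 - n := by
      rw [hc2.2.1, Nat.cast_sub (by omega)]; push_cast; ring
    have hTv : (∑ g : G, S.coeff g) = 4 * ((m : ℤ) * n) := by
      rw [hT, hsum_a, hsum_b, hca, hcb]; push_cast; ring
    apply dillon_aux_final m n hm hn Dset hcardG ((m : ℤ) * n) (Or.inl (by push_cast; ring))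
    · rw [hDcard, hTv]
    · intro g hg; rw [hN g hg, hTv]; push_cast; ring
  · have hca : (DH.card : ℤ) = 2 * m ^ 2 - m := by
      rw [hc1.2.1, Nat.cast_sub (by omega)]; push_cast; ring
    have hcb : (DK.card : ℤ) = 2 * n ^ 2 + n := by
      rw [hc2.2.1]; push_cast; ring
    have hTv : (∑ g : G, S.coeff g) = 4 * (-((m : ℤ) * n)) := by
      rw [hT, hsum_a, hsum_b, hca, hcb]; push_cast; ring
    apply dillon_aux_final m n hm hn Dset hcardG (-((m : ℤ) * n)) (Or.inr (by push_cast; ring))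
    · rw [hDcard, hTv]
    · intro g hg; rw [hN g hg, hTv]; push_cast; ring
  · have hca : (DH.card : ℤ) = 2 * m ^ 2 + m := by
      rw [hc1.2.1]; push_cast; ring
    have hcb : (DK.card : ℤ) = 2 * n ^ 2 - n := by
      rw [hc2.2.1, Nat.cast_sub (by omega)]; push_cast; ring
    have hTv : (∑ g : G, S.coeff g) = 4 * (-((m : ℤ) * n)) := by
      rw [hT, hsum_a, hsum_b, hca, hcb]; push_cast; ring
    apply dillon_aux_final m n hm hn Dset hcardG (-((m : ℤ) * n)) (Or.inr (by push_cast; ring))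
    · rw [hDcard, hTv]
    · intro g hg; rw [hN g hg, hTv]; push_cast; ring
  · have hca : (DH.card : ℤ) = 2 * m ^ 2 + m := by
      rw [hc1.2.1]; push_cast; ring
    have hcb : (DK.card : ℤ) = 2 * n ^ 2 + n := by
      rw [hc2.2.1]; push_cast; ring
    have hTv : (∑ g : G, S.coeff g) = 4 * ((m : ℤ) * n) := by
      rw [hT, hsum_a, hsum_b, hca, hcb]; push_cast; ring
    apply dillon_aux_final m n hm hn Dset hcardG ((m : ℤ) * n) (Or.inl (by push_cast; ring))
    · rw [hDcard, hTv]
    · intro g hg; rw [hN g hg, hTv]; push_cast; ring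
end

section
/- Let G be a group of order 36 with a subgroup H that is elementary abelian of order 9, with order-3 subgroups L₀, L₁, L₂, L₃. Let x, y be elements of the normalizer of H in G such that {1, x, y, xy} is a left transversal of H in G, and let h₁, h₂, h₃ ∈ H. In ℤ[G] set S := L̂₀ − x·h₁·L̂₁ − y·h₂·L̂₂ − xy·h₃·L̂₃, where L̂ᵢ = H − 2Lᵢ (subsets of H summed in ℤ[G]). Then S·S^(−1) = 12H − 6(L̂₀ + xL̂₁x⁻¹ + yL̂₂y⁻¹ + (xy)L̂₃(xy)⁻¹). -/
/-- For `A = ∑ a_g·g` in `ℤ[G]`, `starInv A = ∑ a_g·g⁻¹`. -/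
noncomputable def starInv {G : Type*} [Group G] (A : MonoidAlgebra ℤ G) : MonoidAlgebra ℤ G :=
  MonoidAlgebra.ofCoeff (Finsupp.equivMapDomain (Equiv.inv G) A.coeff)

/-- The finset of elements of a subgroup of a finite group. -/
noncomputable def subFinset {G : Type*} [Group G] [Finite G] (K : Subgroup G) : Finset G :=
  (Set.toFinite (K : Set G)).toFinset

/-- The conjugate subgroup `gKg⁻¹`. -/
def conjSub {G : Type*} [Group G] (g : G) (K : Subgroup G) : Subgroup G :=
  K.map (MulAut.conj g).toMonoidHom

section helpers
variable {G : Type*} [Group G]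
open MonoidAlgebra Finset

lemma zsmul_cancel (n : ℤ) (hn : n ≠ 0) {A B : MonoidAlgebra ℤ G} (h : n • A = n • B) : A = B := by
  refine MonoidAlgebra.ext (Finsupp.ext fun g => ?_)
  have h2 : (n • A : MonoidAlgebra ℤ G).coeff g = (n • B : MonoidAlgebra ℤ G).coeff g := by rw [h]
  simp only [MonoidAlgebra.coeff_smul, Finsupp.smul_apply, smul_eq_mul] at h2
  exact mul_left_cancel₀ hn h2

lemma single_mul_grpSum (a : G) (X : Finset G) :
    MonoidAlgebra.single a (1:ℤ) * grpSum X = ∑ x ∈ X, MonoidAlgebra.single (a * x) (1:ℤ) := by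
  simp [grpSum, Finset.mul_sum, MonoidAlgebra.single_mul_single]

lemma grpSum_mul_single (X : Finset G) (a : G) :
    grpSum X * MonoidAlgebra.single a (1:ℤ) = ∑ x ∈ X, MonoidAlgebra.single (x * a) (1:ℤ) := by
  simp [grpSum, Finset.sum_mul, MonoidAlgebra.single_mul_single]

lemma grpSum_mul_grpSum (X Y : Finset G) :
    grpSum X * grpSum Y = ∑ x ∈ X, ∑ y ∈ Y, MonoidAlgebra.single (x * y) (1:ℤ) := by
  simp [grpSum, Finset.sum_mul_sum, MonoidAlgebra.single_mul_single]

lemma sum_single_left_reindex (X : Finset G) (k : G)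
    (h1 : ∀ x ∈ X, k * x ∈ X) (h2 : ∀ x ∈ X, k⁻¹ * x ∈ X) :
    (∑ x ∈ X, MonoidAlgebra.single (k * x) (1:ℤ)) = grpSum X := by
  rw [grpSum]
  exact Finset.sum_nbij' (fun x => k * x) (fun x => k⁻¹ * x) h1 h2
    (fun a _ => by group) (fun a _ => by group) (fun a _ => rfl)

lemma sum_single_right_reindex (X : Finset G) (k : G)
    (h1 : ∀ x ∈ X, x * k ∈ X) (h2 : ∀ x ∈ X, x * k⁻¹ ∈ X) :
    (∑ x ∈ X, MonoidAlgebra.single (x * k) (1:ℤ)) = grpSum X := by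
  rw [grpSum]
  exact Finset.sum_nbij' (fun x => x * k) (fun x => x * k⁻¹) h1 h2
    (fun a _ => by group) (fun a _ => by group) (fun a _ => rfl)

lemma mem_subFinset [Finite G] {K : Subgroup G} {g : G} : g ∈ subFinset K ↔ g ∈ K :=
  Set.Finite.mem_toFinset _

lemma subFinset_card [Finite G] (K : Subgroup G) : (subFinset K).card = Nat.card K := by
  classical
  haveI := Fintype.ofFinite G
  rw [subFinset, Set.Finite.card_toFinset, Nat.card_eq_fintype_card]
  rfl

lemma grpSum_mul_subFinset [Finite G] (X : Finset G) (K : Subgroup G)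
    (hX : ∀ x ∈ X, ∀ k ∈ K, x * k ∈ X) :
    grpSum X * grpSum (subFinset K) = (Nat.card K : ℤ) • grpSum X := by
  rw [grpSum_mul_grpSum, Finset.sum_comm]
  have h : ∀ k ∈ subFinset K, (∑ x ∈ X, MonoidAlgebra.single (x * k) (1:ℤ)) = grpSum X := by
    intro k hk
    rw [mem_subFinset] at hk
    exact sum_single_right_reindex X k (fun x hx => hX x hx k hk)
      (fun x hx => hX x hx k⁻¹ (inv_mem hk))
  rw [Finset.sum_congr rfl h, Finset.sum_const, subFinset_card]
  simp

lemma subFinset_mul_grpSum [Finite G] (X : Finset G) (K : Subgroup G)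
    (hX : ∀ x ∈ X, ∀ k ∈ K, k * x ∈ X) :
    grpSum (subFinset K) * grpSum X = (Nat.card K : ℤ) • grpSum X := by
  rw [grpSum_mul_grpSum]
  have h : ∀ k ∈ subFinset K, (∑ x ∈ X, MonoidAlgebra.single (k * x) (1:ℤ)) = grpSum X := by
    intro k hk
    rw [mem_subFinset] at hk
    exact sum_single_left_reindex X k (fun x hx => hX x hx k hk)
      (fun x hx => hX x hx k⁻¹ (inv_mem hk))
  rw [Finset.sum_congr rfl h, Finset.sum_const, subFinset_card]
  simp

lemma grpSum_apply [DecidableEq G] (X : Finset G) (g : G) :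
    (grpSum X).coeff g = if g ∈ X then 1 else 0 := by
  rw [grpSum, MonoidAlgebra.coeff_sum, Finsupp.finset_sum_apply]
  simp [MonoidAlgebra.coeff_single, Finsupp.single_apply]

lemma starInv_apply (A : MonoidAlgebra ℤ G) (g : G) : (starInv A).coeff g = A.coeff g⁻¹ := rfl

lemma starInv_sub (A B : MonoidAlgebra ℤ G) : starInv (A - B) = starInv A - starInv B := by
  refine MonoidAlgebra.ext (Finsupp.ext fun g => ?_)
  rw [starInv_apply, MonoidAlgebra.coeff_sub, Finsupp.sub_apply, MonoidAlgebra.coeff_sub,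
    Finsupp.sub_apply, starInv_apply, starInv_apply]

lemma starInv_add (A B : MonoidAlgebra ℤ G) : starInv (A + B) = starInv A + starInv B := by
  refine MonoidAlgebra.ext (Finsupp.ext fun g => ?_)
  rw [starInv_apply, MonoidAlgebra.coeff_add, Finsupp.add_apply, MonoidAlgebra.coeff_add,
    Finsupp.add_apply, starInv_apply, starInv_apply]

lemma starInv_single (a : G) (c : ℤ) :
    starInv (MonoidAlgebra.single a c) = MonoidAlgebra.single a⁻¹ c :=
  congrArg MonoidAlgebra.ofCoeff (Finsupp.equivMapDomain_single _ _ _)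

lemma starInv_single_mul_grpSum (a : G) (X : Finset G) (hX : ∀ x ∈ X, x⁻¹ ∈ X) :
    starInv (MonoidAlgebra.single a (1:ℤ) * grpSum X)
      = grpSum X * MonoidAlgebra.single a⁻¹ (1:ℤ) := by
  classical
  rw [single_mul_grpSum, grpSum_mul_single]
  refine MonoidAlgebra.ext (Finsupp.ext fun g => ?_)
  rw [starInv_apply, MonoidAlgebra.coeff_sum, MonoidAlgebra.coeff_sum, Finsupp.finset_sum_apply,
    Finsupp.finset_sum_apply]
  refine Finset.sum_nbij' (fun x => x⁻¹) (fun x => x⁻¹) hX hX (by simp) (by simp) ?_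
  intro v hv
  have h : (a * v = g⁻¹) ↔ (v⁻¹ * a⁻¹ = g) := by
    rw [← mul_inv_rev, inv_eq_iff_eq_inv, eq_comm]
  simp [MonoidAlgebra.coeff_single, Finsupp.single_apply, h]

lemma starInv_grpSum (X : Finset G) (hX : ∀ x ∈ X, x⁻¹ ∈ X) :
    starInv (grpSum X) = grpSum X := by
  have h := starInv_single_mul_grpSum 1 X hX
  rw [inv_one, ← MonoidAlgebra.one_def, one_mul, mul_one] at h
  exact h

lemma starInv_hat' (X Y : Finset G) (hX : ∀ x ∈ X, x⁻¹ ∈ X) (hY : ∀ x ∈ Y, x⁻¹ ∈ Y) :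
    starInv (grpSum X - 2 * grpSum Y) = grpSum X - 2 * grpSum Y := by
  rw [two_mul, starInv_sub, starInv_add, starInv_grpSum X hX, starInv_grpSum Y hY, ← two_mul]

lemma starInv_hat (a : G) (X Y : Finset G) (hX : ∀ x ∈ X, x⁻¹ ∈ X) (hY : ∀ x ∈ Y, x⁻¹ ∈ Y) :
    starInv (MonoidAlgebra.single a (1:ℤ) * (grpSum X - 2 * grpSum Y))
      = (grpSum X - 2 * grpSum Y) * MonoidAlgebra.single a⁻¹ (1:ℤ) := by
  have e : MonoidAlgebra.single a (1:ℤ) * (grpSum X - 2 * grpSum Y)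
      = MonoidAlgebra.single a (1:ℤ) * grpSum X
        - (MonoidAlgebra.single a (1:ℤ) * grpSum Y + MonoidAlgebra.single a (1:ℤ) * grpSum Y) := by
    noncomm_ring
  rw [e, starInv_sub, starInv_add, starInv_single_mul_grpSum a X hX,
    starInv_single_mul_grpSum a Y hY]
  noncomm_ring

lemma single_conj_grpSum [Finite G] (g : G) (K : Subgroup G) :
    MonoidAlgebra.single g (1:ℤ) * grpSum (subFinset K) * MonoidAlgebra.single g⁻¹ (1:ℤ)
      = grpSum (subFinset (conjSub g K)) := by
  rw [single_mul_grpSum, Finset.sum_mul]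
  simp only [MonoidAlgebra.single_mul_single, mul_one]
  rw [grpSum]
  refine Finset.sum_nbij' (fun t => g * t * g⁻¹) (fun t => g⁻¹ * t * g) ?_ ?_
    (fun a _ => by group) (fun a _ => by group) (fun a _ => rfl)
  · intro t ht
    rw [mem_subFinset] at ht ⊢
    exact ⟨t, ht, rfl⟩
  · intro t ht
    rw [mem_subFinset] at ht ⊢
    obtain ⟨k, hk, hke⟩ := ht
    have hkt : g⁻¹ * t * g = k := by
      rw [← hke]
      show g⁻¹ * ((MulAut.conj g) k) * g = k
      rw [MulAut.conj_apply]
      group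
    show g⁻¹ * t * g ∈ K
    rw [hkt]; exact hk

lemma conjSub_normalizer {H : Subgroup G} {g : G} (hg : g ∈ Subgroup.normalizer (H : Set G)) :
    conjSub g H = H := by
  ext t
  simp only [conjSub, Subgroup.mem_map, MulEquiv.coe_toMonoidHom, MulAut.conj_apply]
  rw [Subgroup.mem_normalizer_iff] at hg
  constructor
  · rintro ⟨k, hk, rfl⟩
    exact (hg k).mp hk
  · intro ht
    refine ⟨g⁻¹ * t * g, ?_, by group⟩
    have := (hg (g⁻¹ * t * g)).symm
    rw [show g * (g⁻¹ * t * g) * g⁻¹ = t from by group] at this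
    exact this.mp ht

lemma conjSub_mul_right {g h : G} {K : Subgroup G} (hcom : ∀ k ∈ K, h * k = k * h) :
    conjSub (g * h) K = conjSub g K := by
  have key : ∀ k ∈ K, (g * h) * k * (g * h)⁻¹ = g * k * g⁻¹ := by
    intro k hk
    have e : (g * h) * k * (g * h)⁻¹ = g * (h * k * h⁻¹) * g⁻¹ := by group
    rw [e, hcom k hk]
    group
  ext t
  simp only [conjSub, Subgroup.mem_map, MulEquiv.coe_toMonoidHom, MulAut.conj_apply]
  exact ⟨fun ⟨k, hk, e⟩ => ⟨k, hk, by rw [← key k hk]; exact e⟩,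
    fun ⟨k, hk, e⟩ => ⟨k, hk, by rw [key k hk]; exact e⟩⟩

lemma main_calc {R : Type*} [Ring R]
    (HH Λ0 Λ1 Λ2 Λ3 l0 l1 l2 l3 u1 u2 u3 v1 v2 v3 C1 C2 C3 : R)
    (hΛ0 : Λ0 = HH - 2*l0) (hΛ1 : Λ1 = HH - 2*l1)
    (hΛ2 : Λ2 = HH - 2*l2) (hΛ3 : Λ3 = HH - 2*l3)
    (hHH : HH*HH = 9*HH)
    (hHl0 : HH*l0 = 3*HH) (hHl1 : HH*l1 = 3*HH) (hHl2 : HH*l2 = 3*HH) (hHl3 : HH*l3 = 3*HH)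
    (hl0H : l0*HH = 3*HH) (hl1H : l1*HH = 3*HH) (hl2H : l2*HH = 3*HH) (hl3H : l3*HH = 3*HH)
    (hll0 : l0*l0 = 3*l0) (hll1 : l1*l1 = 3*l1) (hll2 : l2*l2 = 3*l2) (hll3 : l3*l3 = 3*l3)
    (h01 : l0*l1 = HH) (h02 : l0*l2 = HH) (h03 : l0*l3 = HH)
    (h10 : l1*l0 = HH) (h20 : l2*l0 = HH) (h30 : l3*l0 = HH)
    (h12 : l1*l2 = HH) (h13 : l1*l3 = HH) (h21 : l2*l1 = HH)
    (h23 : l2*l3 = HH) (h31 : l3*l1 = HH) (h32 : l3*l2 = HH)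
    (hc1 : u1*HH*v1 = HH) (hc2 : u2*HH*v2 = HH) (hc3 : u3*HH*v3 = HH)
    (hd1 : u1*l1*v1 = C1) (hd2 : u2*l2*v2 = C2) (hd3 : u3*l3*v3 = C3)
    (hPQ : (1 - u1 - u2 - u3)*HH*(1 - v1 - v2 - v3) = 4*HH) :
    (Λ0 - u1*Λ1 - u2*Λ2 - u3*Λ3) * (Λ0 - Λ1*v1 - Λ2*v2 - Λ3*v3)
      = 12*HH - 6*(Λ0 + (HH - 2*C1) + (HH - 2*C2) + (HH - 2*C3)) := by
  have key : ∀ a b : R, a = HH - 2*b → ∀ c d : R, c = HH - 2*d → HH*d = 3*HH → b*HH = 3*HH →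
      b*d = HH → a * c = HH := by
    intro a b hab c d hcd h1 h2 h3
    rw [hab, hcd, show (HH - 2*b)*(HH - 2*d) = HH*HH - 2*(HH*d) - 2*(b*HH) + 4*(b*d) from by
      noncomm_ring, hHH, h1, h2, h3]
    noncomm_ring
  have o01 : Λ0 * Λ1 = HH := key _ _ hΛ0 _ _ hΛ1 hHl1 hl0H h01
  have o02 : Λ0 * Λ2 = HH := key _ _ hΛ0 _ _ hΛ2 hHl2 hl0H h02
  have o03 : Λ0 * Λ3 = HH := key _ _ hΛ0 _ _ hΛ3 hHl3 hl0H h03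
  have o10 : Λ1 * Λ0 = HH := key _ _ hΛ1 _ _ hΛ0 hHl0 hl1H h10
  have o20 : Λ2 * Λ0 = HH := key _ _ hΛ2 _ _ hΛ0 hHl0 hl2H h20
  have o30 : Λ3 * Λ0 = HH := key _ _ hΛ3 _ _ hΛ0 hHl0 hl3H h30
  have o12 : Λ1 * Λ2 = HH := key _ _ hΛ1 _ _ hΛ2 hHl2 hl1H h12
  have o13 : Λ1 * Λ3 = HH := key _ _ hΛ1 _ _ hΛ3 hHl3 hl1H h13
  have o21 : Λ2 * Λ1 = HH := key _ _ hΛ2 _ _ hΛ1 hHl1 hl2H h21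
  have o23 : Λ2 * Λ3 = HH := key _ _ hΛ2 _ _ hΛ3 hHl3 hl2H h23
  have o31 : Λ3 * Λ1 = HH := key _ _ hΛ3 _ _ hΛ1 hHl1 hl3H h31
  have o32 : Λ3 * Λ2 = HH := key _ _ hΛ3 _ _ hΛ2 hHl2 hl3H h32
  have dkey : ∀ a b : R, a = HH - 2*b → HH*b = 3*HH → b*HH = 3*HH → b*b = 3*b →
      a * a = 3*HH - 6*a := by
    intro a b hab h1 h2 h3
    rw [hab, show (HH - 2*b)*(HH - 2*b) = HH*HH - 2*(HH*b) - 2*(b*HH) + 4*(b*b) from by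
      noncomm_ring, hHH, h1, h2, h3]
    noncomm_ring
  have d0 : Λ0 * Λ0 = 3*HH - 6*Λ0 := dkey _ _ hΛ0 hHl0 hl0H hll0
  have d1 : Λ1 * Λ1 = 3*HH - 6*Λ1 := dkey _ _ hΛ1 hHl1 hl1H hll1
  have d2 : Λ2 * Λ2 = 3*HH - 6*Λ2 := dkey _ _ hΛ2 hHl2 hl2H hll2
  have d3 : Λ3 * Λ3 = 3*HH - 6*Λ3 := dkey _ _ hΛ3 hHl3 hl3H hll3
  have ddkey : ∀ a b u v c : R, a = HH - 2*b → u*HH*v = HH → u*b*v = c →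
      u*(3*HH - 6*a)*v = -(3*HH) + 12*c := by
    intro a b u v c hab h1 h2
    rw [hab, show u*(3*HH - 6*(HH - 2*b))*v = -(3*(u*HH*v)) + 12*(u*b*v) from by
      noncomm_ring, h1, h2]
  have dd1 : u1*(3*HH - 6*Λ1)*v1 = -(3*HH) + 12*C1 := ddkey _ _ _ _ _ hΛ1 hc1 hd1
  have dd2 : u2*(3*HH - 6*Λ2)*v2 = -(3*HH) + 12*C2 := ddkey _ _ _ _ _ hΛ2 hc2 hd2
  have dd3 : u3*(3*HH - 6*Λ3)*v3 = -(3*HH) + 12*C3 := ddkey _ _ _ _ _ hΛ3 hc3 hd3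
  have e1 : (1 - u1 - u2 - u3)*HH*(1 - v1 - v2 - v3)
      = HH + u1*HH*v1 + u2*HH*v2 + u3*HH*v3
        - (HH*v1 + HH*v2 + HH*v3 + u1*HH + u2*HH + u3*HH)
        + (u1*HH*v2 + u1*HH*v3 + u2*HH*v1 + u2*HH*v3 + u3*HH*v1 + u3*HH*v2) := by
    noncomm_ring
  rw [hPQ, hc1, hc2, hc3] at e1
  have e2 : HH + HH + HH + HH
        - (HH*v1 + HH*v2 + HH*v3 + u1*HH + u2*HH + u3*HH)
        + (u1*HH*v2 + u1*HH*v3 + u2*HH*v1 + u2*HH*v3 + u3*HH*v1 + u3*HH*v2)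
      = 4*HH
        - (HH*v1 + HH*v2 + HH*v3 + u1*HH + u2*HH + u3*HH)
        + (u1*HH*v2 + u1*HH*v3 + u2*HH*v1 + u2*HH*v3 + u3*HH*v1 + u3*HH*v2) := by
    noncomm_ring
  rw [e2] at e1
  have e3 : 4*HH + (HH*v1 + HH*v2 + HH*v3 + u1*HH + u2*HH + u3*HH)
      = 4*HH + (u1*HH*v2 + u1*HH*v3 + u2*HH*v1 + u2*HH*v3 + u3*HH*v1 + u3*HH*v2) := by
    conv_lhs => rw [e1]
    abel
  have hzero : (HH*v1 + HH*v2 + HH*v3 + u1*HH + u2*HH + u3*HH)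
      = (u1*HH*v2 + u1*HH*v3 + u2*HH*v1 + u2*HH*v3 + u3*HH*v1 + u3*HH*v2) :=
    add_left_cancel e3
  calc (Λ0 - u1*Λ1 - u2*Λ2 - u3*Λ3) * (Λ0 - Λ1*v1 - Λ2*v2 - Λ3*v3)
      = Λ0*Λ0 - (Λ0*Λ1)*v1 - (Λ0*Λ2)*v2 - (Λ0*Λ3)*v3
        - u1*(Λ1*Λ0) - u2*(Λ2*Λ0) - u3*(Λ3*Λ0)
        + u1*(Λ1*Λ1)*v1 + u2*(Λ2*Λ2)*v2 + u3*(Λ3*Λ3)*v3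
        + u1*(Λ1*Λ2)*v2 + u1*(Λ1*Λ3)*v3 + u2*(Λ2*Λ1)*v1
        + u2*(Λ2*Λ3)*v3 + u3*(Λ3*Λ1)*v1 + u3*(Λ3*Λ2)*v2 := by noncomm_ring
    _ = (3*HH - 6*Λ0) - HH*v1 - HH*v2 - HH*v3
        - u1*HH - u2*HH - u3*HH
        + u1*(3*HH - 6*Λ1)*v1 + u2*(3*HH - 6*Λ2)*v2 + u3*(3*HH - 6*Λ3)*v3
        + u1*HH*v2 + u1*HH*v3 + u2*HH*v1
        + u2*HH*v3 + u3*HH*v1 + u3*HH*v2 := by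
        rw [o01, o02, o03, o10, o20, o30, o12, o13, o21, o23, o31, o32, d0, d1, d2, d3]
    _ = (3*HH - 6*Λ0) - HH*v1 - HH*v2 - HH*v3
        - u1*HH - u2*HH - u3*HH
        + (-(3*HH) + 12*C1) + (-(3*HH) + 12*C2) + (-(3*HH) + 12*C3)
        + u1*HH*v2 + u1*HH*v3 + u2*HH*v1
        + u2*HH*v3 + u3*HH*v1 + u3*HH*v2 := by rw [dd1, dd2, dd3]
    _ = (12*HH - 6*(Λ0 + (HH - 2*C1) + (HH - 2*C2) + (HH - 2*C3)))
        + ((u1*HH*v2 + u1*HH*v3 + u2*HH*v1 + u2*HH*v3 + u3*HH*v1 + u3*HH*v2)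
          - (HH*v1 + HH*v2 + HH*v3 + u1*HH + u2*HH + u3*HH)) := by noncomm_ring
    _ = (12*HH - 6*(Λ0 + (HH - 2*C1) + (HH - 2*C2) + (HH - 2*C3)))
        + ((u1*HH*v2 + u1*HH*v3 + u2*HH*v1 + u2*HH*v3 + u3*HH*v1 + u3*HH*v2)
          - (u1*HH*v2 + u1*HH*v3 + u2*HH*v1 + u2*HH*v3 + u3*HH*v1 + u3*HH*v2)) := by
        rw [hzero]
    _ = 12*HH - 6*(Λ0 + (HH - 2*C1) + (HH - 2*C2) + (HH - 2*C3)) := by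
        rw [sub_self, add_zero]

end helpers

/-- in a group `G` of order 36 with elementary abelian subgroup `H` of order 9
(with order-3 subgroups `L₀, …, L₃`), for `x, y` in the normalizer of `H` such that
`{1, x, y, xy}` is a left transversal of `H`, and `h₁, h₂, h₃ ∈ H`, the element
`S = L̂₀ − xh₁L̂₁ − yh₂L̂₂ − xyh₃L̂₃` satisfies
`S·S⁽⁻¹⁾ = 12H − 6(L̂₀ + xL̂₁x⁻¹ + yL̂₂y⁻¹ + xyL̂₃(xy)⁻¹)`. -/
theorem spread_SSinv {G : Type*} [Group G] [Fintype G]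
    (hGcard : Fintype.card G = 36)
    (H : Subgroup G) (hHcard : Nat.card H = 9)
    (hHexp : ∀ h ∈ H, h ^ 3 = 1)
    (hHcomm : ∀ h ∈ H, ∀ h' ∈ H, h * h' = h' * h)
    (L : Fin 4 → Subgroup G)
    (hLsub : ∀ i, L i ≤ H)
    (hLinj : Function.Injective L)
    (hLcard : ∀ i, Nat.card (L i) = 3)
    (hLall : ∀ K : Subgroup G, K ≤ H → Nat.card K = 3 → ∃ i, L i = K)
    (x y : G) (hx : x ∈ Subgroup.normalizer (H : Set G)) (hy : y ∈ Subgroup.normalizer (H : Set G))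
    (htrans : ∀ g : G, ∃! i : Fin 4,
      (QuotientGroup.mk g : G ⧸ H) = QuotientGroup.mk (![1, x, y, x * y] i))
    (h₁ h₂ h₃ : G) (hh₁ : h₁ ∈ H) (hh₂ : h₂ ∈ H) (hh₃ : h₃ ∈ H)
    (Lhat : Fin 4 → MonoidAlgebra ℤ G)
    (hLhat : ∀ i, Lhat i = grpSum (subFinset H) - 2 * grpSum (subFinset (L i)))
    (S : MonoidAlgebra ℤ G)
    (hS : S = Lhat 0 - MonoidAlgebra.single (x * h₁) (1 : ℤ) * Lhat 1
            - MonoidAlgebra.single (y * h₂) (1 : ℤ) * Lhat 2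
            - MonoidAlgebra.single (x * y * h₃) (1 : ℤ) * Lhat 3) :
    S * starInv S =
      (12 : ℤ) • grpSum (subFinset H) -
      (6 : ℤ) • (Lhat 0 +
        (grpSum (subFinset H) - 2 * grpSum (subFinset (conjSub x (L 1)))) +
        (grpSum (subFinset H) - 2 * grpSum (subFinset (conjSub y (L 2)))) +
        (grpSum (subFinset H) - 2 * grpSum (subFinset (conjSub (x * y) (L 3))))) := by
  classical
  -- abbreviations (as plain terms)
  have hHfinv : ∀ a ∈ subFinset H, a⁻¹ ∈ subFinset H :=
    fun a ha => mem_subFinset.mpr (inv_mem (mem_subFinset.mp ha))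
  have hLfinv : ∀ i : Fin 4, ∀ a ∈ subFinset (L i), a⁻¹ ∈ subFinset (L i) :=
    fun i a ha => mem_subFinset.mpr (inv_mem (mem_subFinset.mp ha))
  -- basic products
  have hHHmul : grpSum (subFinset H) * grpSum (subFinset H)
      = 9 * grpSum (subFinset H) := by
    have h := grpSum_mul_subFinset (subFinset H) H
      (fun a ha k hk => mem_subFinset.mpr (mul_mem (mem_subFinset.mp ha) hk))
    rw [hHcard, zsmul_eq_mul] at h
    rw [h]; norm_num
  have hHl : ∀ i : Fin 4, grpSum (subFinset H) * grpSum (subFinset (L i))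
      = 3 * grpSum (subFinset H) := by
    intro i
    have h := grpSum_mul_subFinset (subFinset H) (L i)
      (fun a ha k hk => mem_subFinset.mpr (mul_mem (mem_subFinset.mp ha) (hLsub i hk)))
    rw [hLcard i, zsmul_eq_mul] at h
    rw [h]; norm_num
  have hlH : ∀ i : Fin 4, grpSum (subFinset (L i)) * grpSum (subFinset H)
      = 3 * grpSum (subFinset H) := by
    intro i
    have h := subFinset_mul_grpSum (subFinset H) (L i)
      (fun a ha k hk => mem_subFinset.mpr (mul_mem (hLsub i hk) (mem_subFinset.mp ha)))
    rw [hLcard i, zsmul_eq_mul] at h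
    rw [h]; norm_num
  have hll : ∀ i : Fin 4, grpSum (subFinset (L i)) * grpSum (subFinset (L i))
      = 3 * grpSum (subFinset (L i)) := by
    intro i
    have h := grpSum_mul_subFinset (subFinset (L i)) (L i)
      (fun a ha k hk => mem_subFinset.mpr (mul_mem (mem_subFinset.mp ha) hk))
    rw [hLcard i, zsmul_eq_mul] at h
    rw [h]; norm_num
  have hGH : grpSum (Finset.univ : Finset G) * grpSum (subFinset H)
      = 9 * grpSum (Finset.univ : Finset G) := by
    have h := grpSum_mul_subFinset (Finset.univ : Finset G) H
      (fun a _ k _ => Finset.mem_univ _)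
    rw [hHcard, zsmul_eq_mul] at h
    rw [h]; norm_num
  have hHG : grpSum (subFinset H) * grpSum (Finset.univ : Finset G)
      = 9 * grpSum (Finset.univ : Finset G) := by
    have h := subFinset_mul_grpSum (Finset.univ : Finset G) H
      (fun a _ k _ => Finset.mem_univ _)
    rw [hHcard, zsmul_eq_mul] at h
    rw [h]; norm_num
  have htop : subFinset (⊤ : Subgroup G) = (Finset.univ : Finset G) :=
    Finset.ext fun a => by simp [mem_subFinset]
  have hGG : grpSum (Finset.univ : Finset G) * grpSum (Finset.univ : Finset G)
      = 36 * grpSum (Finset.univ : Finset G) := by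
    have h := grpSum_mul_subFinset (Finset.univ : Finset G) (⊤ : Subgroup G)
      (fun a _ k _ => Finset.mem_univ _)
    rw [htop] at h
    rw [h, Subgroup.card_top, Nat.card_eq_fintype_card, hGcard, zsmul_eq_mul]
    norm_num
  -- products of distinct L i
  have hdisj : ∀ i j : Fin 4, i ≠ j → (L i ⊓ L j : Subgroup G) = ⊥ := by
    intro i j hij
    have hdvd := Subgroup.card_dvd_of_le (inf_le_left : L i ⊓ L j ≤ L i)
    rw [hLcard i] at hdvd
    rcases (Nat.prime_three).eq_one_or_self_of_dvd _ hdvd with h1 | h3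
    · exact Subgroup.card_eq_one.mp h1
    · exfalso
      have e1 : L i ⊓ L j = L i :=
        Subgroup.eq_of_le_of_card_ge inf_le_left (by rw [h3, hLcard i])
    -- then L i ≤ L j
      have e2 : L i ≤ L j := e1 ▸ inf_le_right
      have e3 : L i = L j :=
        Subgroup.eq_of_le_of_card_ge e2 (by rw [hLcard i, hLcard j])
      exact hij (hLinj e3)
  have hij : ∀ i j : Fin 4, i ≠ j →
      grpSum (subFinset (L i)) * grpSum (subFinset (L j)) = grpSum (subFinset H) := by
    intro i j hne
    rw [grpSum_mul_grpSum, ← Finset.sum_product', grpSum]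
    refine Finset.sum_nbij (fun p => p.1 * p.2) ?_ ?_ ?_ (fun p _ => rfl)
    · intro p hp
      rw [Finset.mem_product] at hp
      exact mem_subFinset.mpr
        (mul_mem (hLsub i (mem_subFinset.mp hp.1)) (hLsub j (mem_subFinset.mp hp.2)))
    · intro p hp q hq h
      simp only [Finset.coe_product, Set.mem_prod, Finset.mem_coe] at hp hq
      have hp1 := mem_subFinset.mp hp.1
      have hp2 := mem_subFinset.mp hp.2
      have hq1 := mem_subFinset.mp hq.1
      have hq2 := mem_subFinset.mp hq.2
      have h2 : q.1⁻¹ * p.1 = q.2 * p.2⁻¹ := by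
        have := congrArg (fun z => q.1⁻¹ * z * p.2⁻¹) h
        simpa [mul_assoc] using this
      have hmem1 : q.1⁻¹ * p.1 ∈ L i := mul_mem (inv_mem hq1) hp1
      have hmem2 : q.1⁻¹ * p.1 ∈ L j := h2 ▸ mul_mem hq2 (inv_mem hp2)
      have : q.1⁻¹ * p.1 ∈ (L i ⊓ L j : Subgroup G) := Subgroup.mem_inf.mpr ⟨hmem1, hmem2⟩
      rw [hdisj i j hne, Subgroup.mem_bot] at this
      have e1 : p.1 = q.1 := by
        have := congrArg (fun z => q.1 * z) this
        simpa [mul_assoc] using this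
      have e2 : p.2 = q.2 := by
        have h' : p.1 * p.2 = q.1 * q.2 := h
        rw [e1] at h'
        exact mul_left_cancel h'
      exact Prod.ext e1 e2
    · -- surjectivity via cardinality
      intro b hb
      have hcards : (subFinset H).card ≤ ((subFinset (L i)) ×ˢ (subFinset (L j))).card := by
        rw [Finset.card_product, subFinset_card, subFinset_card, subFinset_card,
          hHcard, hLcard i, hLcard j]
      have hsurj := Finset.surj_on_of_inj_on_of_card_le
        (s := (subFinset (L i)) ×ˢ (subFinset (L j))) (t := subFinset H)
        (fun p _ => p.1 * p.2)
        (fun p hp => by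
          rw [Finset.mem_product] at hp
          exact mem_subFinset.mpr
            (mul_mem (hLsub i (mem_subFinset.mp hp.1)) (hLsub j (mem_subFinset.mp hp.2))))
        (fun p q hp hq h => by
          have hp' := Finset.mem_product.mp hp
          have hq' := Finset.mem_product.mp hq
          have hp1 := mem_subFinset.mp hp'.1
          have hp2 := mem_subFinset.mp hp'.2
          have hq1 := mem_subFinset.mp hq'.1
          have hq2 := mem_subFinset.mp hq'.2
          have h2 : q.1⁻¹ * p.1 = q.2 * p.2⁻¹ := by
            have := congrArg (fun z => q.1⁻¹ * z * p.2⁻¹) h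
            simpa [mul_assoc] using this
          have hmem1 : q.1⁻¹ * p.1 ∈ L i := mul_mem (inv_mem hq1) hp1
          have hmem2 : q.1⁻¹ * p.1 ∈ L j := h2 ▸ mul_mem hq2 (inv_mem hp2)
          have hb' : q.1⁻¹ * p.1 ∈ (L i ⊓ L j : Subgroup G) :=
            Subgroup.mem_inf.mpr ⟨hmem1, hmem2⟩
          rw [hdisj i j hne, Subgroup.mem_bot] at hb'
          have e1 : p.1 = q.1 := by
            have := congrArg (fun z => q.1 * z) hb'
            simpa [mul_assoc] using this
          have e2 : p.2 = q.2 := by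
            have h' : p.1 * p.2 = q.1 * q.2 := h
            rw [e1] at h'
            exact mul_left_cancel h'
          exact Prod.ext e1 e2)
        hcards
      obtain ⟨a, ha, hab⟩ := hsurj b hb
      exact ⟨a, ha, hab.symm⟩
  -- conjugation facts
  have hnormmem1 : x * h₁ ∈ Subgroup.normalizer (H : Set G) := mul_mem hx (Subgroup.le_normalizer hh₁)
  have hnormmem2 : y * h₂ ∈ Subgroup.normalizer (H : Set G) := mul_mem hy (Subgroup.le_normalizer hh₂)
  have hnormmem3 : x * y * h₃ ∈ Subgroup.normalizer (H : Set G) :=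
    mul_mem (mul_mem hx hy) (Subgroup.le_normalizer hh₃)
  have hcmem : ∀ g ∈ Subgroup.normalizer (H : Set G),
      MonoidAlgebra.single g (1:ℤ) * grpSum (subFinset H) * MonoidAlgebra.single g⁻¹ (1:ℤ)
        = grpSum (subFinset H) := by
    intro g hg
    rw [single_conj_grpSum, conjSub_normalizer hg]
  have hc1 := hcmem (x * h₁) hnormmem1
  have hc2 := hcmem (y * h₂) hnormmem2
  have hc3 := hcmem (x * y * h₃) hnormmem3
  have hd1 : MonoidAlgebra.single (x * h₁) (1:ℤ) * grpSum (subFinset (L 1)) *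
      MonoidAlgebra.single (x * h₁)⁻¹ (1:ℤ) = grpSum (subFinset (conjSub x (L 1))) := by
    rw [single_conj_grpSum,
      conjSub_mul_right (fun k hk => hHcomm h₁ hh₁ k (hLsub 1 hk))]
  have hd2 : MonoidAlgebra.single (y * h₂) (1:ℤ) * grpSum (subFinset (L 2)) *
      MonoidAlgebra.single (y * h₂)⁻¹ (1:ℤ) = grpSum (subFinset (conjSub y (L 2))) := by
    rw [single_conj_grpSum,
      conjSub_mul_right (fun k hk => hHcomm h₂ hh₂ k (hLsub 2 hk))]
  have hd3 : MonoidAlgebra.single (x * y * h₃) (1:ℤ) * grpSum (subFinset (L 3)) *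
      MonoidAlgebra.single (x * y * h₃)⁻¹ (1:ℤ) = grpSum (subFinset (conjSub (x * y) (L 3))) := by
    rw [single_conj_grpSum,
      conjSub_mul_right (fun k hk => hHcomm h₃ hh₃ k (hLsub 3 hk))]
  -- the covering of G by the four cosets
  have hcosetmem : ∀ t h' : G, h' ∈ H → ∀ g : G,
      (g ∈ (subFinset H).image (fun z => t * h' * z)) ↔
        ((QuotientGroup.mk g : G ⧸ H) = QuotientGroup.mk t) := by
    intro t h' hh' g
    rw [Finset.mem_image]
    constructor
    · rintro ⟨z, hz, rfl⟩
      rw [mem_subFinset] at hz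
      rw [eq_comm, QuotientGroup.eq]
      rw [show t⁻¹ * (t * h' * z) = h' * z from by group]
      exact mul_mem hh' hz
    · intro hq
      rw [eq_comm, QuotientGroup.eq] at hq
      refine ⟨h'⁻¹ * (t⁻¹ * g), mem_subFinset.mpr (mul_mem (inv_mem hh') hq), ?_⟩
      group
  have himg : ∀ a : G, MonoidAlgebra.single a (1:ℤ) * grpSum (subFinset H)
      = grpSum ((subFinset H).image (fun z => a * z)) := by
    intro a
    rw [single_mul_grpSum, grpSum,
      Finset.sum_image (fun p _ q _ h => mul_left_cancel h)]
  have hcover : grpSum (subFinset H)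
      + MonoidAlgebra.single (x * h₁) (1:ℤ) * grpSum (subFinset H)
      + MonoidAlgebra.single (y * h₂) (1:ℤ) * grpSum (subFinset H)
      + MonoidAlgebra.single (x * y * h₃) (1:ℤ) * grpSum (subFinset H)
      = grpSum (Finset.univ : Finset G) := by
    refine MonoidAlgebra.ext (Finsupp.ext fun g => ?_)
    obtain ⟨i0, hi0, huniq⟩ := htrans g
    have happ : ∀ A B : MonoidAlgebra ℤ G, ∀ g : G, (A + B).coeff g = A.coeff g + B.coeff g :=
      fun A B g => Finsupp.add_apply A.coeff B.coeff g
    rw [happ, happ, happ, himg (x * h₁), himg (y * h₂), himg (x * y * h₃),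
      grpSum_apply, grpSum_apply, grpSum_apply, grpSum_apply, grpSum_apply,
      if_pos (Finset.mem_univ g)]
    have m0 : (g ∈ subFinset H) ↔
        ((QuotientGroup.mk g : G ⧸ H) = QuotientGroup.mk (![1, x, y, x * y] 0)) := by
      rw [show (![1, x, y, x * y] 0 : G) = 1 from rfl, mem_subFinset, eq_comm,
        QuotientGroup.eq]
      simp
    have m1 : (g ∈ (subFinset H).image (fun z => x * h₁ * z)) ↔
        ((QuotientGroup.mk g : G ⧸ H) = QuotientGroup.mk (![1, x, y, x * y] 1)) := by
      rw [show (![1, x, y, x * y] 1 : G) = x from rfl]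
      exact hcosetmem x h₁ hh₁ g
    have m2 : (g ∈ (subFinset H).image (fun z => y * h₂ * z)) ↔
        ((QuotientGroup.mk g : G ⧸ H) = QuotientGroup.mk (![1, x, y, x * y] 2)) := by
      rw [show (![1, x, y, x * y] 2 : G) = y from rfl]
      exact hcosetmem y h₂ hh₂ g
    have m3 : (g ∈ (subFinset H).image (fun z => x * y * h₃ * z)) ↔
        ((QuotientGroup.mk g : G ⧸ H) = QuotientGroup.mk (![1, x, y, x * y] 3)) := by
      rw [show (![1, x, y, x * y] 3 : G) = x * y from rfl]
      exact hcosetmem (x * y) h₃ hh₃ g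
    rw [if_congr m0 rfl rfl, if_congr m1 rfl rfl, if_congr m2 rfl rfl, if_congr m3 rfl rfl]
    have key : (∑ k : Fin 4,
        if (QuotientGroup.mk g : G ⧸ H) = QuotientGroup.mk (![1, x, y, x * y] k)
        then (1:ℤ) else 0) = 1 := by
      rw [Finset.sum_eq_single_of_mem i0 (Finset.mem_univ _)
        (fun k _ hk => if_neg (fun h => hk (huniq k h))), if_pos hi0]
    rw [Fin.sum_univ_four] at key
    exact key
  -- the T-trick: off-diagonal coset sums
  have hT : (1 - MonoidAlgebra.single (x * h₁) (1:ℤ) - MonoidAlgebra.single (y * h₂) (1:ℤ)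
      - MonoidAlgebra.single (x * y * h₃) (1:ℤ)) * grpSum (subFinset H)
      = 2 * grpSum (subFinset H) - grpSum (Finset.univ : Finset G) := by
    have e : (1 - MonoidAlgebra.single (x * h₁) (1:ℤ) - MonoidAlgebra.single (y * h₂) (1:ℤ)
        - MonoidAlgebra.single (x * y * h₃) (1:ℤ)) * grpSum (subFinset H)
        = 2 * grpSum (subFinset H)
          - (grpSum (subFinset H)
            + MonoidAlgebra.single (x * h₁) (1:ℤ) * grpSum (subFinset H)
            + MonoidAlgebra.single (y * h₂) (1:ℤ) * grpSum (subFinset H)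
            + MonoidAlgebra.single (x * y * h₃) (1:ℤ) * grpSum (subFinset H)) := by
      noncomm_ring
    rw [e, hcover]
  have hT' : grpSum (subFinset H) * (1 - MonoidAlgebra.single (x * h₁)⁻¹ (1:ℤ)
      - MonoidAlgebra.single (y * h₂)⁻¹ (1:ℤ) - MonoidAlgebra.single (x * y * h₃)⁻¹ (1:ℤ))
      = 2 * grpSum (subFinset H) - grpSum (Finset.univ : Finset G) := by
    have e := congrArg starInv hT
    have l : starInv ((1 - MonoidAlgebra.single (x * h₁) (1:ℤ)
        - MonoidAlgebra.single (y * h₂) (1:ℤ)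
        - MonoidAlgebra.single (x * y * h₃) (1:ℤ)) * grpSum (subFinset H))
        = grpSum (subFinset H)
          - grpSum (subFinset H) * MonoidAlgebra.single (x * h₁)⁻¹ (1:ℤ)
          - grpSum (subFinset H) * MonoidAlgebra.single (y * h₂)⁻¹ (1:ℤ)
          - grpSum (subFinset H) * MonoidAlgebra.single (x * y * h₃)⁻¹ (1:ℤ) := by
      rw [show (1 - MonoidAlgebra.single (x * h₁) (1:ℤ)
          - MonoidAlgebra.single (y * h₂) (1:ℤ)
          - MonoidAlgebra.single (x * y * h₃) (1:ℤ)) * grpSum (subFinset H)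
          = grpSum (subFinset H)
            - MonoidAlgebra.single (x * h₁) (1:ℤ) * grpSum (subFinset H)
            - MonoidAlgebra.single (y * h₂) (1:ℤ) * grpSum (subFinset H)
            - MonoidAlgebra.single (x * y * h₃) (1:ℤ) * grpSum (subFinset H) from by
        noncomm_ring]
      rw [starInv_sub, starInv_sub, starInv_sub, starInv_grpSum _ hHfinv,
        starInv_single_mul_grpSum _ _ hHfinv, starInv_single_mul_grpSum _ _ hHfinv,
        starInv_single_mul_grpSum _ _ hHfinv]
    have r : starInv (2 * grpSum (subFinset H) - grpSum (Finset.univ : Finset G))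
        = 2 * grpSum (subFinset H) - grpSum (Finset.univ : Finset G) := by
      rw [two_mul, starInv_sub, starInv_add, starInv_grpSum _ hHfinv,
        starInv_grpSum _ (fun a _ => Finset.mem_univ a⁻¹), ← two_mul]
    rw [l, r] at e
    rw [show grpSum (subFinset H) * (1 - MonoidAlgebra.single (x * h₁)⁻¹ (1:ℤ)
        - MonoidAlgebra.single (y * h₂)⁻¹ (1:ℤ)
        - MonoidAlgebra.single (x * y * h₃)⁻¹ (1:ℤ))
        = grpSum (subFinset H)
          - grpSum (subFinset H) * MonoidAlgebra.single (x * h₁)⁻¹ (1:ℤ)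
          - grpSum (subFinset H) * MonoidAlgebra.single (y * h₂)⁻¹ (1:ℤ)
          - grpSum (subFinset H) * MonoidAlgebra.single (x * y * h₃)⁻¹ (1:ℤ) from by
      noncomm_ring]
    exact e
  have hPQ : (1 - MonoidAlgebra.single (x * h₁) (1:ℤ) - MonoidAlgebra.single (y * h₂) (1:ℤ)
      - MonoidAlgebra.single (x * y * h₃) (1:ℤ)) * grpSum (subFinset H) *
      (1 - MonoidAlgebra.single (x * h₁)⁻¹ (1:ℤ) - MonoidAlgebra.single (y * h₂)⁻¹ (1:ℤ)
      - MonoidAlgebra.single (x * y * h₃)⁻¹ (1:ℤ)) = 4 * grpSum (subFinset H) := by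
    set P := (1 - MonoidAlgebra.single (x * h₁) (1:ℤ) - MonoidAlgebra.single (y * h₂) (1:ℤ)
      - MonoidAlgebra.single (x * y * h₃) (1:ℤ)) with hP
    set Q := (1 - MonoidAlgebra.single (x * h₁)⁻¹ (1:ℤ) - MonoidAlgebra.single (y * h₂)⁻¹ (1:ℤ)
      - MonoidAlgebra.single (x * y * h₃)⁻¹ (1:ℤ)) with hQ
    have c1 : (P * grpSum (subFinset H)) * (grpSum (subFinset H) * Q)
        = P * (grpSum (subFinset H) * grpSum (subFinset H)) * Q := by noncomm_ring
    rw [hHHmul, hT, hT'] at c1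
    have c2 : (2 * grpSum (subFinset H) - grpSum (Finset.univ : Finset G)) *
        (2 * grpSum (subFinset H) - grpSum (Finset.univ : Finset G))
        = 4 * (grpSum (subFinset H) * grpSum (subFinset H))
          - 2 * (grpSum (subFinset H) * grpSum (Finset.univ : Finset G))
          - 2 * (grpSum (Finset.univ : Finset G) * grpSum (subFinset H))
          + grpSum (Finset.univ : Finset G) * grpSum (Finset.univ : Finset G) := by
      noncomm_ring
    rw [hHHmul, hHG, hGH, hGG] at c2
    have c3 : (4 * (9 * grpSum (subFinset H)) - 2 * (9 * grpSum (Finset.univ : Finset G))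
        - 2 * (9 * grpSum (Finset.univ : Finset G))
        + 36 * grpSum (Finset.univ : Finset G) : MonoidAlgebra ℤ G)
        = 9 * (4 * grpSum (subFinset H)) := by noncomm_ring
    have c4 : P * (9 * grpSum (subFinset H)) * Q
        = 9 * (P * grpSum (subFinset H) * Q) := by noncomm_ring
    have c5 : (9 : MonoidAlgebra ℤ G) * (P * grpSum (subFinset H) * Q)
        = 9 * (4 * grpSum (subFinset H)) := by
      rw [← c4, ← c1, c2, c3]
    refine zsmul_cancel 9 (by norm_num) ?_
    rw [zsmul_eq_mul, zsmul_eq_mul]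
    exact_mod_cast c5
  -- starInv S
  have s0 : starInv (Lhat 0) = Lhat 0 := by
    rw [hLhat 0]
    exact starInv_hat' _ _ hHfinv (hLfinv 0)
  have s1 : starInv (MonoidAlgebra.single (x * h₁) (1:ℤ) * Lhat 1)
      = Lhat 1 * MonoidAlgebra.single (x * h₁)⁻¹ (1:ℤ) := by
    rw [hLhat 1]
    exact starInv_hat _ _ _ hHfinv (hLfinv 1)
  have s2 : starInv (MonoidAlgebra.single (y * h₂) (1:ℤ) * Lhat 2)
      = Lhat 2 * MonoidAlgebra.single (y * h₂)⁻¹ (1:ℤ) := by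
    rw [hLhat 2]
    exact starInv_hat _ _ _ hHfinv (hLfinv 2)
  have s3 : starInv (MonoidAlgebra.single (x * y * h₃) (1:ℤ) * Lhat 3)
      = Lhat 3 * MonoidAlgebra.single (x * y * h₃)⁻¹ (1:ℤ) := by
    rw [hLhat 3]
    exact starInv_hat _ _ _ hHfinv (hLfinv 3)
  have hstar : starInv S
      = Lhat 0 - Lhat 1 * MonoidAlgebra.single (x * h₁)⁻¹ (1:ℤ)
        - Lhat 2 * MonoidAlgebra.single (y * h₂)⁻¹ (1:ℤ)
        - Lhat 3 * MonoidAlgebra.single (x * y * h₃)⁻¹ (1:ℤ) := by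
    rw [hS, starInv_sub, starInv_sub, starInv_sub, s0, s1, s2, s3]
  -- main computation
  have final := main_calc (grpSum (subFinset H)) (Lhat 0) (Lhat 1) (Lhat 2) (Lhat 3)
    (grpSum (subFinset (L 0))) (grpSum (subFinset (L 1))) (grpSum (subFinset (L 2)))
    (grpSum (subFinset (L 3)))
    (MonoidAlgebra.single (x * h₁) (1:ℤ)) (MonoidAlgebra.single (y * h₂) (1:ℤ))
    (MonoidAlgebra.single (x * y * h₃) (1:ℤ))
    (MonoidAlgebra.single (x * h₁)⁻¹ (1:ℤ)) (MonoidAlgebra.single (y * h₂)⁻¹ (1:ℤ))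
    (MonoidAlgebra.single (x * y * h₃)⁻¹ (1:ℤ))
    (grpSum (subFinset (conjSub x (L 1)))) (grpSum (subFinset (conjSub y (L 2))))
    (grpSum (subFinset (conjSub (x * y) (L 3))))
    (hLhat 0) (hLhat 1) (hLhat 2) (hLhat 3)
    hHHmul (hHl 0) (hHl 1) (hHl 2) (hHl 3)
    (hlH 0) (hlH 1) (hlH 2) (hlH 3)
    (hll 0) (hll 1) (hll 2) (hll 3)
    (hij 0 1 (by decide)) (hij 0 2 (by decide)) (hij 0 3 (by decide))
    (hij 1 0 (by decide)) (hij 2 0 (by decide)) (hij 3 0 (by decide))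
    (hij 1 2 (by decide)) (hij 1 3 (by decide)) (hij 2 1 (by decide))
    (hij 2 3 (by decide)) (hij 3 1 (by decide)) (hij 3 2 (by decide))
    hc1 hc2 hc3 hd1 hd2 hd3 hPQ
  rw [hstar, hS, final, zsmul_eq_mul, zsmul_eq_mul]
  norm_num
end
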